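/- arXiv:2202.04899 — 7 statements merged into one kernel-verified Lean document; each statement's English description precedes it below -/
import Mathlib

section
/- Let φ : ℝ≥0 → ℝ≥0 be positive and decreasing, and let X, V : ℝ≥0 → ℝ≥0 be continuously differentiable functions satisfying X'(t) ≤ V(t) and V'(t) ≤ -φ(X(t))·V(t) for all t ≥ 0. If V(0) < ∫_{X(0)}^∞ φ(r) dr, then letting X_M be the unique value with V(0) = ∫_{X(0)}^{X_M} φ(r) dr, one has X(t) ≤ X_M and V(t) ≤ V(0)·exp(-φ(X_M)·t) for all t ≥ 0. -/
open MeasureTheory Set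

/-- SDDI lemma: if `X' ≤ V` and `V' ≤ -φ(X)·V` with `φ` positive decreasing, and
`V 0 < ∫_{X 0}^∞ φ`, then with `X_M` defined by `V 0 = ∫_{X 0}^{X_M} φ`, we have
`X t ≤ X_M` and `V t ≤ V 0 · exp(-φ(X_M) t)` for all `t ≥ 0`. -/
theorem stmt_0 (φ X V X' V' : ℝ → ℝ)
    (hφpos : ∀ r, 0 ≤ r → 0 < φ r)
    (hφdec : ∀ r s, 0 ≤ r → r ≤ s → φ s ≤ φ r)
    (hXnn : ∀ t, 0 ≤ t → 0 ≤ X t) (hVnn : ∀ t, 0 ≤ t → 0 ≤ V t)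
    (hX : ∀ t, 0 ≤ t → HasDerivAt X (X' t) t)
    (hV : ∀ t, 0 ≤ t → HasDerivAt V (V' t) t)
    (hX'c : ContinuousOn X' (Ici 0)) (hV'c : ContinuousOn V' (Ici 0))
    (h1 : ∀ t, 0 ≤ t → X' t ≤ V t)
    (h2 : ∀ t, 0 ≤ t → V' t ≤ -φ (X t) * V t)
    (hlt : ENNReal.ofReal (V 0) < ∫⁻ r in Ioi (X 0), ENNReal.ofReal (φ r))
    (XM : ℝ) (hXM0 : X 0 ≤ XM)
    (hXM : V 0 = ∫ r in (X 0)..XM, φ r) :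
    ∀ t, 0 ≤ t → X t ≤ XM ∧ V t ≤ V 0 * Real.exp (-φ XM * t) := by
  clear hlt hX'c hV'c
  set ψ : ℝ → ℝ := fun r => φ (max r 0) with hψdef
  have hψanti : Antitone ψ := fun r s hrs =>
    hφdec _ _ (le_max_right r 0) (max_le_max hrs le_rfl)
  have hψpos : ∀ r, 0 < ψ r := fun r => hφpos _ (le_max_right r 0)
  have hψint : ∀ a b : ℝ, IntervalIntegrable ψ volume a b := fun a b =>
    (hψanti.antitoneOn _).intervalIntegrable
  set F : ℝ → ℝ := fun x => ∫ r in (X 0)..x, ψ r with hFdef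
  have hFcont : Continuous F := intervalIntegral.continuous_primitive hψint (X 0)
  have hsub : ∀ x y : ℝ, F y - F x = ∫ r in x..y, ψ r := fun x y =>
    intervalIntegral.integral_interval_sub_left (hψint _ _) (hψint _ _)
  have key : ∀ x y : ℝ, F y - F x ≤ ψ x * (y - x) := by
    intro x y
    rw [hsub]
    rcases le_total x y with hle | hle
    · calc (∫ r in x..y, ψ r) ≤ ∫ _r in x..y, ψ x :=
            intervalIntegral.integral_mono_on hle (hψint _ _)
              intervalIntegrable_const (fun u hu => hψanti hu.1)
        _ = ψ x * (y - x) := by simp [mul_comm]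
    · have hlow : ψ x * (x - y) ≤ ∫ r in y..x, ψ r := by
        calc ψ x * (x - y) = ∫ _r in y..x, ψ x := by simp [mul_comm]
          _ ≤ ∫ r in y..x, ψ r :=
            intervalIntegral.integral_mono_on hle intervalIntegrable_const
              (hψint _ _) (fun u hu => hψanti hu.2)
      rw [intervalIntegral.integral_symm]
      linarith
  have hFmono : StrictMono F := by
    intro x y hxy
    have hl : ψ y * (y - x) ≤ F y - F x := by
      rw [hsub]
      calc ψ y * (y - x) = ∫ _r in x..y, ψ y := by simp [mul_comm]
        _ ≤ ∫ r in x..y, ψ r :=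
          intervalIntegral.integral_mono_on hxy.le intervalIntegrable_const
            (hψint _ _) (fun u hu => hψanti hu.2)
    nlinarith [hψpos y]
  have hXc : ContinuousOn X (Ici 0) := fun t ht => (hX t ht).continuousAt.continuousWithinAt
  have hVc : ContinuousOn V (Ici 0) := fun t ht => (hV t ht).continuousAt.continuousWithinAt
  set h : ℝ → ℝ := fun t => V t + F (X t) with hhdef
  have hhc : ContinuousOn h (Ici 0) := hVc.add (hFcont.comp_continuousOn hXc)
  -- slope condition for the Lyapunov function h
  have hslope : ∀ x ∈ Ici (0:ℝ), ∀ r : ℝ, (0:ℝ) < r →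
      ∃ᶠ z in nhdsWithin x (Ioi x), (z - x)⁻¹ * (h z - h x) < r := by
    intro x hx0 r hr
    have hXx : (0:ℝ) ≤ X x := hXnn x hx0
    have hψx : ψ (X x) = φ (X x) := by simp [hψdef, max_eq_left hXx]
    set g : ℝ → ℝ := fun t => V t + φ (X x) * X t with hgdef
    have hd : HasDerivAt g (V' x + φ (X x) * X' x) x :=
      (hV x hx0).add ((hX x hx0).const_mul _)
    have hd0 : V' x + φ (X x) * X' x ≤ 0 := by
      have h2x := h2 x hx0
      have h1x := h1 x hx0
      have hpos : 0 < φ (X x) := hφpos _ hXx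
      nlinarith
    have htend : Filter.Tendsto (slope g x) (nhdsWithin x (Ioi x))
        (nhds (V' x + φ (X x) * X' x)) :=
      (hasDerivAt_iff_tendsto_slope.1 hd).mono_left
        (nhdsWithin_mono x (fun z hz => ne_of_gt hz))
    have hev : ∀ᶠ z in nhdsWithin x (Ioi x), slope g x z < r :=
      htend.eventually_lt_const (lt_of_le_of_lt hd0 hr)
    have hev2 : ∀ᶠ z in nhdsWithin x (Ioi x), (z - x)⁻¹ * (h z - h x) < r := by
      filter_upwards [hev, self_mem_nhdsWithin] with z hz (hzx : x < z)
      have hFk : F (X z) - F (X x) ≤ φ (X x) * (X z - X x) := by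
        have := key (X x) (X z); rwa [hψx] at this
      have hhg : h z - h x ≤ g z - g x := by
        simp only [hhdef, hgdef]; ring_nf; nlinarith
      have hinv : (0:ℝ) < (z - x)⁻¹ := inv_pos.2 (by linarith)
      calc (z - x)⁻¹ * (h z - h x) ≤ (z - x)⁻¹ * (g z - g x) := by
            exact mul_le_mul_of_nonneg_left hhg hinv.le
        _ = slope g x z := by rw [slope_def_field]; field_simp
        _ < r := hz
    exact hev2.frequently
  -- main Lyapunov estimate
  have main : ∀ b, 0 ≤ b → h b ≤ h 0 := by
    intro b hb
    have := le_gronwallBound_of_liminf_deriv_right_le (f := h) (f' := fun _ => 0)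
      (δ := h 0) (K := 0) (ε := 0) (a := 0) (b := b)
      (hhc.mono (Icc_subset_Ici_self))
      (fun x hx r hr => hslope x hx.1 r hr)
      le_rfl (fun x _ => by simp) b ⟨hb, le_rfl⟩
    simpa [gronwallBound] using this
  have hF0 : F (X 0) = 0 := intervalIntegral.integral_same
  have hFXM : F XM = V 0 := by
    rw [hXM, hFdef]
    refine intervalIntegral.integral_congr (fun r hr => ?_)
    rw [uIcc_of_le hXM0] at hr
    have : (0:ℝ) ≤ r := le_trans (hXnn 0 le_rfl) hr.1
    simp [hψdef, max_eq_left this]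
  have part1 : ∀ t, 0 ≤ t → X t ≤ XM := by
    intro t ht
    have hm := main t ht
    have hVt := hVnn t ht
    have : F (X t) ≤ F XM := by
      simp only [hhdef, hF0, add_zero] at hm
      linarith [hFXM ▸ hm]
    exact hFmono.le_iff_le.1 this
  intro t ht
  refine ⟨part1 t ht, ?_⟩
  -- Gronwall for V with rate φ XM
  have hbound : ∀ x, 0 ≤ x → V' x ≤ -φ XM * V x := by
    intro x hx
    have h2x := h2 x hx
    have hφle : φ XM ≤ φ (X x) := hφdec _ _ (hXnn x hx) (part1 x hx)
    nlinarith [hVnn x hx]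
  have hgr := le_gronwallBound_of_liminf_deriv_right_le (f := V) (f' := V')
    (δ := V 0) (K := -φ XM) (ε := 0) (a := 0) (b := t)
    (hVc.mono (Icc_subset_Ici_self))
    (fun x hx r hr => by
      have htend : Filter.Tendsto (slope V x) (nhdsWithin x (Ioi x)) (nhds (V' x)) :=
        (hasDerivAt_iff_tendsto_slope.1 (hV x hx.1)).mono_left
          (nhdsWithin_mono x (fun z hz => ne_of_gt hz))
      have hev : ∀ᶠ z in nhdsWithin x (Ioi x), slope V x z < r :=
        htend.eventually_lt_const hr
      have hev2 : ∀ᶠ z in nhdsWithin x (Ioi x), (z - x)⁻¹ * (V z - V x) < r := by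
        filter_upwards [hev] with z hz
        rwa [slope_def_field, div_eq_inv_mul] at hz
      exact hev2.frequently)
    le_rfl (fun x hx => by simpa using hbound x hx.1) t ⟨ht, le_rfl⟩
  rwa [sub_zero, gronwallBound_ε0] at hgr
end

section
/- Suppose X, V : ℝ≥0 → ℝ≥0 with X continuous, V nonincreasing, X(t) ≤ X(0) + ∫_0^t V(s) ds, and suppose there is C : ℝ≥0 × ℝ≥0 → ℝ≥0 such that for each t, r ↦ C(t,r) is monotone increasing in r, C(t,r) → 0 as t → ∞ for each r ≥ X(0), and V(t) ≤ V(0)·C(t, sup_{s≤t} X(s)) for all t. If there exists r₀ ≥ X(0) with r₀ − X(0) > V(0)·∫_0^∞ C(s, r₀) ds, then sup_t X(t) ≤ r₀ and V(t) → 0 as t → ∞. -/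
open MeasureTheory Set Filter

/-! If `X` ever exceeded `r₀`, look at the first time `T` it reaches `r₀`. Before `T` the running
supremum of `X` is at most `r₀`, so monotonicity of `C` gives `V ≤ V(0)·C(·, r₀)` on `[0, T)`,
whence `X(T) ≤ X(0) + V(0)·∫_0^∞ C(s, r₀) ds < r₀`, a contradiction. Once `X ≤ r₀` everywhere,
the same bound `0 ≤ V(t) ≤ V(0)·C(t, r₀)` squeezes `V(t)` to `0`. -/

theorem exists_first_ge_of_continuousOn {f : ℝ → ℝ} {a b r : ℝ} (hf : ContinuousOn f (Icc a b))
    (hab : a ≤ b) (hr : r ≤ f b) : ∃ c ∈ Icc a b, r ≤ f c ∧ ∀ x ∈ Ico a c, f x < r := by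
  set K := Icc a b ∩ f ⁻¹' Ici r
  have hKne : K.Nonempty := ⟨b, right_mem_Icc.2 hab, hr⟩
  have hKbdd : BddBelow K := ⟨a, fun x hx => hx.1.1⟩
  have hcK : sInf K ∈ K :=
    (hf.preimage_isClosed_of_isClosed isClosed_Icc isClosed_Ici).csInf_mem hKne hKbdd
  refine ⟨sInf K, hcK.1, hcK.2, fun x hx => ?_⟩
  by_contra! hrx
  exact hx.2.not_ge (csInf_le hKbdd ⟨⟨hx.1, hx.2.le.trans hcK.1.2⟩, hrx⟩)

theorem sSup_image_Icc_mem_Icc {α β : Type*} [Preorder α] [ConditionallyCompleteLattice β]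
    {f : α → β} {a b : α} {r : β} (hab : a ≤ b) (hf : ∀ x ∈ Icc a b, f x ≤ r) :
    sSup (f '' Icc a b) ∈ Icc (f a) r := by
  have hbdd : ∀ y ∈ f '' Icc a b, y ≤ r := by
    rintro _ ⟨x, hx, rfl⟩
    exact hf x hx
  have ha : f a ∈ f '' Icc a b := mem_image_of_mem f (left_mem_Icc.2 hab)
  exact ⟨le_csSup ⟨r, hbdd⟩ ha, csSup_le ⟨f a, ha⟩ hbdd⟩

theorem intervalIntegral_lt_of_le_of_lintegral_lt {f g : ℝ → ℝ} {a T b : ℝ} (haT : a ≤ T)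
    (hf : IntervalIntegrable f volume a T) (hf0 : ∀ s ∈ Ioo a T, 0 ≤ f s)
    (hfg : ∀ s ∈ Ioo a T, f s ≤ g s)
    (hg : ∫⁻ s in Ioi a, ENNReal.ofReal (g s) < ENNReal.ofReal b) :
    ∫ s in a..T, f s < b := by
  have hIoo : IntegrableOn f (Ioo a T) := hf.1.mono_set Ioo_subset_Ioc_self
  rw [intervalIntegral.integral_of_le haT, integral_Ioc_eq_integral_Ioo]
  refine (ENNReal.ofReal_lt_ofReal_iff'.mp ?_).1
  calc ENNReal.ofReal (∫ s in Ioo a T, f s)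
      = ∫⁻ s in Ioo a T, ENNReal.ofReal (f s) :=
        ofReal_integral_eq_lintegral_ofReal hIoo
          ((ae_restrict_iff' measurableSet_Ioo).2 (Eventually.of_forall hf0))
    _ ≤ ∫⁻ s in Ioo a T, ENNReal.ofReal (g s) :=
        setLIntegral_mono' measurableSet_Ioo fun s hs => ENNReal.ofReal_le_ofReal (hfg s hs)
    _ ≤ ∫⁻ s in Ioi a, ENNReal.ofReal (g s) := lintegral_mono_set Ioo_subset_Ioi_self
    _ < ENNReal.ofReal b := hg

theorem stmt_12_general (X V : ℝ → ℝ) (C : ℝ → ℝ → ℝ)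
    (hXc : ContinuousOn X (Ici 0))
    (hXnn : ∀ t, 0 ≤ t → 0 ≤ X t) (hVnn : ∀ t, 0 ≤ t → 0 ≤ V t)
    (hVmono : ∀ s t, 0 ≤ s → s ≤ t → V t ≤ V s)
    (hXint : ∀ t, 0 ≤ t → X t ≤ X 0 + ∫ s in (0 : ℝ)..t, V s)
    (hCmono : ∀ t, 0 ≤ t → ∀ r₁ r₂, 0 ≤ r₁ → r₁ ≤ r₂ → C t r₁ ≤ C t r₂)
    (hCtend : ∀ r, X 0 ≤ r → Tendsto (fun t => C t r) atTop (nhds 0))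
    (hVC : ∀ t, 0 ≤ t → V t ≤ V 0 * C t (sSup (X '' Icc 0 t)))
    (r₀ : ℝ) (hr₀ : X 0 ≤ r₀)
    (hcond : ENNReal.ofReal (V 0) * (∫⁻ s in Ioi (0 : ℝ), ENNReal.ofReal (C s r₀)) <
      ENNReal.ofReal (r₀ - X 0)) :
    (∀ t, 0 ≤ t → X t ≤ r₀) ∧ Tendsto V atTop (nhds 0) := by
  have hV0 : 0 ≤ V 0 := hVnn 0 le_rfl
  have hVC₀ : ∀ t, 0 ≤ t → (∀ s ∈ Icc 0 t, X s ≤ r₀) → V t ≤ V 0 * C t r₀ := fun t ht hX => by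
    obtain ⟨hsup₀, hsup⟩ := sSup_image_Icc_mem_Icc ht hX
    exact (hVC t ht).trans
      (mul_le_mul_of_nonneg_left (hCmono t ht _ _ ((hXnn 0 le_rfl).trans hsup₀) hsup) hV0)
  have hcond_mul : ∫⁻ s in Ioi (0 : ℝ), ENNReal.ofReal (V 0 * C s r₀) < ENNReal.ofReal (r₀ - X 0) := by
    simp_rw [ENNReal.ofReal_mul hV0]
    rwa [lintegral_const_mul' _ _ ENNReal.ofReal_ne_top]
  have hbound : ∀ t, 0 ≤ t → X t ≤ r₀ := by
    by_contra! ⟨t₀, ht₀, hXt₀⟩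
    obtain ⟨T, hT, hXT, hbefore⟩ :=
      exists_first_ge_of_continuousOn (hXc.mono Icc_subset_Ici_self) ht₀ hXt₀.le
    have hint : ∫ s in (0 : ℝ)..T, V s < r₀ - X 0 := by
      refine intervalIntegral_lt_of_le_of_lintegral_lt hT.1 ?_ (fun s hs => hVnn s hs.1.le)
        (fun s hs => hVC₀ s hs.1.le fun u hu => (hbefore u ⟨hu.1, hu.2.trans_lt hs.2⟩).le) hcond_mul
      refine AntitoneOn.intervalIntegrable fun s hs t _ hst => hVmono s t ?_ hst
      exact (uIcc_of_le hT.1 ▸ hs).1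
    linarith [hXint T hT.1]
  refine ⟨hbound, tendsto_of_tendsto_of_tendsto_of_le_of_le' tendsto_const_nhds
    (by simpa using (hCtend r₀ hr₀).const_mul (V 0)) ?_ ?_⟩
  · filter_upwards [eventually_ge_atTop 0] with t ht using hVnn t ht
  · filter_upwards [eventually_ge_atTop 0] with t ht using hVC₀ t ht fun s hs => hbound s hs.1

/-- Abstract flocking criterion (hierarchical leadership method): if
`X(t) ≤ X(0) + ∫_0^t V`, `V` nonincreasing with `V(t) ≤ V(0)·C(t, sup_{s≤t} X(s))`,
`C(·,r)` vanishing at infinity and `C(t,·)` increasing, then the existence of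
`r₀ ≥ X(0)` with `r₀ − X(0) > V(0)·∫_0^∞ C(s,r₀) ds` implies `X` is bounded by `r₀`
and `V(t) → 0`. -/
theorem stmt_12 (X V : ℝ → ℝ) (C : ℝ → ℝ → ℝ)
    (hXc : ContinuousOn X (Ici 0))
    (hXnn : ∀ t, 0 ≤ t → 0 ≤ X t) (hVnn : ∀ t, 0 ≤ t → 0 ≤ V t)
    (hVmono : ∀ s t, 0 ≤ s → s ≤ t → V t ≤ V s)
    (hXint : ∀ t, 0 ≤ t → X t ≤ X 0 + ∫ s in (0 : ℝ)..t, V s)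
    (hCnn : ∀ t r, 0 ≤ C t r)
    (hCmono : ∀ t, 0 ≤ t → ∀ r₁ r₂, 0 ≤ r₁ → r₁ ≤ r₂ → C t r₁ ≤ C t r₂)
    (hCtend : ∀ r, X 0 ≤ r → Tendsto (fun t => C t r) atTop (nhds 0))
    (hVC : ∀ t, 0 ≤ t → V t ≤ V 0 * C t (sSup (X '' Icc 0 t)))
    (r₀ : ℝ) (hr₀ : X 0 ≤ r₀)
    (hcond : ENNReal.ofReal (V 0) * (∫⁻ s in Ioi (0 : ℝ), ENNReal.ofReal (C s r₀)) <
      ENNReal.ofReal (r₀ - X 0)) :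
    (∀ t, 0 ≤ t → X t ≤ r₀) ∧ Tendsto V atTop (nhds 0) :=
  stmt_12_general X V C hXc hXnn hVnn hVmono hXint hCmono hCtend hVC r₀ hr₀ hcond
end

section
/- Suppose X, V : ℝ≥0 → ℝ≥0 with X continuous, V nonincreasing, X(t) ≤ X(0) + ∫_0^t V(s) ds, and suppose there is C : ℝ≥0 × ℝ≥0 → [0,1] such that for each t, r ↦ C(t,r) is decreasing in r, and for all s ≤ t, V(t) ≤ (1 − C(t−s, sup_{u≤t} X(u)))·V(s). If there exist r₀ ≥ X(0) and t₀ > 0 with r₀ − X(0) > V(0)·t₀ / C(t₀, r₀), then sup_t X(t) ≤ r₀ and V(t) → 0 as t → ∞. -/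
open MeasureTheory Set Filter Topology

/-- Abstract flocking criterion (general leadership method): if
`X(t) ≤ X(0) + ∫_0^t V`, `V` nonincreasing with
`V(t) ≤ (1 − C(t−s, sup_{u≤t} X(u)))·V(s)` for `s ≤ t`, with `C` valued in `[0,1]` and
decreasing in `r`, then the existence of `r₀ ≥ X(0)` and `t₀ > 0` with
`r₀ − X(0) > V(0)·t₀ / C(t₀,r₀)` implies `X` is bounded by `r₀` and `V(t) → 0`. -/
theorem stmt_13 (X V : ℝ → ℝ) (C : ℝ → ℝ → ℝ)
    (hXc : ContinuousOn X (Ici 0))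
    (hXnn : ∀ t, 0 ≤ t → 0 ≤ X t) (hVnn : ∀ t, 0 ≤ t → 0 ≤ V t)
    (hVmono : ∀ s t, 0 ≤ s → s ≤ t → V t ≤ V s)
    (hXint : ∀ t, 0 ≤ t → X t ≤ X 0 + ∫ s in (0 : ℝ)..t, V s)
    (hC01 : ∀ t r, 0 ≤ C t r ∧ C t r ≤ 1)
    (hCanti : ∀ t, 0 ≤ t → ∀ r₁ r₂, 0 ≤ r₁ → r₁ ≤ r₂ → C t r₂ ≤ C t r₁)
    (hVC : ∀ s t, 0 ≤ s → s ≤ t →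
      V t ≤ (1 - C (t - s) (sSup (X '' Icc 0 t))) * V s)
    (r₀ t₀ : ℝ) (hr₀ : X 0 ≤ r₀) (ht₀ : 0 < t₀) (hCpos : 0 < C t₀ r₀)
    (hcond : V 0 * t₀ / C t₀ r₀ < r₀ - X 0) :
    (∀ t, 0 ≤ t → X t ≤ r₀) ∧ Tendsto V atTop (nhds 0) := by
  set c := C t₀ r₀ with hc
  have hc1 : c ≤ 1 := (hC01 t₀ r₀).2
  have h1c : (0:ℝ) ≤ 1 - c := by linarith
  have hX0nn : 0 ≤ X 0 := hXnn 0 le_rfl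
  have hV0nn : 0 ≤ V 0 := hVnn 0 le_rfl
  have hr0nn : 0 ≤ r₀ := le_trans hX0nn hr₀
  have hX0lt : X 0 < r₀ := by
    have : 0 ≤ V 0 * t₀ / c := by positivity
    linarith
  -- integrability of V on intervals of nonnegative reals
  have hVint : ∀ a b : ℝ, 0 ≤ a → a ≤ b → IntervalIntegrable V MeasureTheory.volume a b := by
    intro a b ha hab
    apply AntitoneOn.intervalIntegrable
    rw [Set.uIcc_of_le hab]
    intro x hx y hy hxy
    exact hVmono x y (le_trans ha hx.1) hxy
  -- sup bound
  have hsup : ∀ T : ℝ, 0 ≤ T → (∀ u ∈ Icc 0 T, X u ≤ r₀) →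
      C t₀ r₀ ≤ C t₀ (sSup (X '' Icc 0 T)) := by
    intro T hT hH
    have hbdd : ∀ x ∈ X '' Icc 0 T, x ≤ r₀ := by
      rintro x ⟨u, hu, rfl⟩; exact hH u hu
    have hle : sSup (X '' Icc 0 T) ≤ r₀ := Real.sSup_le hbdd hr0nn
    have hge : 0 ≤ sSup (X '' Icc 0 T) := by
      have h0mem : X 0 ∈ X '' Icc 0 T := ⟨0, ⟨le_rfl, hT⟩, rfl⟩
      have := le_csSup ⟨r₀, fun x hx => hbdd x hx⟩ h0mem
      linarith
    exact hCanti t₀ ht₀.le _ _ hge hle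
  -- geometric decay of V along the grid
  have hVdec : ∀ n : ℕ, (∀ u ∈ Icc 0 ((n:ℝ)*t₀), X u ≤ r₀) →
      V ((n:ℝ)*t₀) ≤ (1-c)^n * V 0 := by
    intro n
    induction n with
    | zero => intro _; simp
    | succ n ih =>
      intro hH
      push_cast at hH ⊢
      have hnt : (0:ℝ) ≤ (n:ℝ)*t₀ := by positivity
      have hstep : (n:ℝ)*t₀ ≤ ((n:ℝ)+1)*t₀ := by nlinarith
      have hH' : ∀ u ∈ Icc 0 ((n:ℝ)*t₀), X u ≤ r₀ :=
        fun u hu => hH u ⟨hu.1, le_trans hu.2 hstep⟩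
      have h1 := hVC ((n:ℝ)*t₀) (((n:ℝ)+1)*t₀) hnt hstep
      have hdiff : ((n:ℝ)+1)*t₀ - (n:ℝ)*t₀ = t₀ := by ring
      rw [hdiff] at h1
      have hmid : (0:ℝ) ≤ ((n:ℝ)+1)*t₀ := by positivity
      have h2 : c ≤ C t₀ (sSup (X '' Icc 0 (((n:ℝ)+1)*t₀))) := hsup _ hmid hH
      have h3 := (hC01 t₀ (sSup (X '' Icc 0 (((n:ℝ)+1)*t₀)))).2
      have h4 := hVnn ((n:ℝ)*t₀) hnt
      have h5 := ih hH'
      calc V (((n:ℝ)+1)*t₀)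
          ≤ (1 - C t₀ (sSup (X '' Icc 0 (((n:ℝ)+1)*t₀)))) * V ((n:ℝ)*t₀) := h1
        _ ≤ (1-c) * V ((n:ℝ)*t₀) := mul_le_mul_of_nonneg_right (by linarith) h4
        _ ≤ (1-c) * ((1-c)^n * V 0) := mul_le_mul_of_nonneg_left h5 h1c
        _ = (1-c)^(n+1) * V 0 := by ring
  -- integral bound
  have hInt : ∀ n : ℕ, ∀ t, (n:ℝ)*t₀ ≤ t → t ≤ ((n:ℝ)+1)*t₀ →
      (∀ u ∈ Icc 0 t, X u ≤ r₀) →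
      (∫ s in (0:ℝ)..t, V s) ≤ (∑ k ∈ Finset.range (n+1), (1-c)^k) * (t₀ * V 0) := by
    intro n
    induction n with
    | zero =>
      intro t h0t ht1 _
      norm_num at h0t ht1
      have hint := hVint 0 t le_rfl h0t
      have hmono : (∫ s in (0:ℝ)..t, V s) ≤ ∫ _s in (0:ℝ)..t, V 0 :=
        intervalIntegral.integral_mono_on h0t hint intervalIntegrable_const
          (fun s hs => hVmono 0 s le_rfl hs.1)
      rw [intervalIntegral.integral_const, smul_eq_mul] at hmono
      have : (t - 0) * V 0 ≤ t₀ * V 0 := by nlinarith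
      simpa using le_trans hmono this
    | succ n ih =>
      intro t hlo hhi hH
      push_cast at hlo hhi
      have hnt0 : (0:ℝ) ≤ (n:ℝ)*t₀ := by positivity
      have hmid : (0:ℝ) ≤ ((n:ℝ)+1)*t₀ := by positivity
      have hmid_le : ((n:ℝ)+1)*t₀ ≤ t := hlo
      have h0t : 0 ≤ t := le_trans hmid hmid_le
      have hsplit := intervalIntegral.integral_add_adjacent_intervals
        (hVint 0 (((n:ℝ)+1)*t₀) le_rfl hmid) (hVint (((n:ℝ)+1)*t₀) t hmid hmid_le)
      have hH1 : ∀ u ∈ Icc 0 (((n:ℝ)+1)*t₀), X u ≤ r₀ :=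
        fun u hu => hH u ⟨hu.1, hu.2.trans hmid_le⟩
      have hfirst := ih (((n:ℝ)+1)*t₀) (by nlinarith) le_rfl hH1
      have hVd : V (((n:ℝ)+1)*t₀) ≤ (1-c)^(n+1) * V 0 := by
        have h := hVdec (n+1)
        push_cast at h
        exact h hH1
      have hsecond : (∫ s in (((n:ℝ)+1)*t₀)..t, V s) ≤ (1-c)^(n+1) * (t₀ * V 0) := by
        have hmono : (∫ s in (((n:ℝ)+1)*t₀)..t, V s)
            ≤ ∫ _s in (((n:ℝ)+1)*t₀)..t, V (((n:ℝ)+1)*t₀) :=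
          intervalIntegral.integral_mono_on hmid_le (hVint _ _ hmid hmid_le)
            intervalIntegrable_const (fun s hs => hVmono _ s hmid hs.1)
        rw [intervalIntegral.integral_const, smul_eq_mul] at hmono
        have hlen : t - ((n:ℝ)+1)*t₀ ≤ t₀ := by linarith
        have hVp : 0 ≤ V (((n:ℝ)+1)*t₀) := hVnn _ hmid
        calc (∫ s in (((n:ℝ)+1)*t₀)..t, V s)
            ≤ (t - ((n:ℝ)+1)*t₀) * V (((n:ℝ)+1)*t₀) := hmono
          _ ≤ t₀ * V (((n:ℝ)+1)*t₀) := mul_le_mul_of_nonneg_right hlen hVp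
          _ ≤ t₀ * ((1-c)^(n+1) * V 0) := mul_le_mul_of_nonneg_left hVd ht₀.le
          _ = (1-c)^(n+1) * (t₀ * V 0) := by ring
      have hcomb := add_le_add hfirst hsecond
      rw [hsplit] at hcomb
      calc (∫ s in (0:ℝ)..t, V s)
          ≤ (∑ k ∈ Finset.range (n+1), (1-c)^k) * (t₀ * V 0) + (1-c)^(n+1) * (t₀ * V 0) :=
            hcomb
        _ = (∑ k ∈ Finset.range (n+1+1), (1-c)^k) * (t₀ * V 0) := by
            rw [Finset.sum_range_succ (fun k => (1-c)^k) (n+1)]; ring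
  -- geometric sum bound
  have hgeo : ∀ m : ℕ, (∑ k ∈ Finset.range m, (1-c)^k) ≤ 1/c := by
    intro m
    rw [le_div_iff₀ hCpos]
    nlinarith [geom_sum_mul (1-c) m, pow_nonneg h1c m]
  -- key quantitative lemma
  have hB : ∀ t, 0 ≤ t → (∀ u ∈ Icc 0 t, X u ≤ r₀) → X t < r₀ := by
    intro t ht hH
    set n := ⌊t/t₀⌋₊ with hn
    have hfl : (n:ℝ) ≤ t/t₀ := Nat.floor_le (div_nonneg ht ht₀.le)
    have hfl2 : t/t₀ < (n:ℝ)+1 := Nat.lt_floor_add_one (t/t₀)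
    have hn1 : (n:ℝ)*t₀ ≤ t := by
      calc (n:ℝ)*t₀ ≤ (t/t₀)*t₀ := mul_le_mul_of_nonneg_right hfl ht₀.le
        _ = t := div_mul_cancel₀ t ht₀.ne'
    have hn2 : t ≤ ((n:ℝ)+1)*t₀ := by
      calc t = (t/t₀)*t₀ := (div_mul_cancel₀ t ht₀.ne').symm
        _ ≤ ((n:ℝ)+1)*t₀ := mul_le_mul_of_nonneg_right hfl2.le ht₀.le
    have h1 := hInt n t hn1 hn2 hH
    have h2 := hgeo (n+1)
    have h3 : (∫ s in (0:ℝ)..t, V s) ≤ V 0 * t₀ / c := by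
      calc (∫ s in (0:ℝ)..t, V s)
          ≤ (∑ k ∈ Finset.range (n+1), (1-c)^k) * (t₀ * V 0) := h1
        _ ≤ (1/c) * (t₀ * V 0) := mul_le_mul_of_nonneg_right h2 (by positivity)
        _ = V 0 * t₀ / c := by ring
    have h4 := hXint t ht
    linarith
  -- X is bounded by r₀
  have hXbound : ∀ t, 0 ≤ t → X t ≤ r₀ := by
    by_contra hcon
    push_neg at hcon
    obtain ⟨T, hT0, hTgt⟩ := hcon
    set B := {t : ℝ | t ∈ Icc 0 T ∧ ∀ u ∈ Icc 0 t, X u ≤ r₀} with hBdef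
    have h0B : (0:ℝ) ∈ B := by
      refine ⟨⟨le_rfl, hT0⟩, fun u hu => ?_⟩
      have : u = 0 := le_antisymm hu.2 hu.1
      rw [this]; exact hX0lt.le
    have hBne : B.Nonempty := ⟨0, h0B⟩
    have hBbdd : BddAbove B := ⟨T, fun x hx => hx.1.2⟩
    set s := sSup B with hsdef
    have hs0 : 0 ≤ s := le_csSup hBbdd h0B
    have hsT : s ≤ T := csSup_le hBne (fun x hx => hx.1.2)
    have hHs : ∀ u ∈ Icc 0 s, X u ≤ r₀ := by
      intro u hu
      rcases lt_or_eq_of_le hu.2 with hlt | heq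
      · obtain ⟨b, hbB, hub⟩ := exists_lt_of_lt_csSup hBne hlt
        exact hbB.2 u ⟨hu.1, hub.le⟩
      · rw [heq]
        rcases eq_or_lt_of_le hs0 with h0s | h0s
        · rw [← h0s]; exact hX0lt.le
        · have hne : (𝓝[Ico 0 s] s).NeBot := by
            rw [← mem_closure_iff_nhdsWithin_neBot, closure_Ico (ne_of_lt h0s)]
            exact ⟨hs0, le_rfl⟩
          have htend : Tendsto X (𝓝[Ico 0 s] s) (𝓝 (X s)) :=
            (hXc s hs0).mono (fun x hx => hx.1)
          refine le_of_tendsto htend ?_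
          filter_upwards [self_mem_nhdsWithin] with w hw
          obtain ⟨b, hbB, hwb⟩ := exists_lt_of_lt_csSup hBne hw.2
          exact hbB.2 w ⟨hw.1, hwb.le⟩
    have hXs : X s < r₀ := hB s hs0 hHs
    have hsltT : s < T := by
      rcases eq_or_lt_of_le hsT with h | h
      · exact absurd (hHs T ⟨hT0, le_of_eq h.symm⟩) (not_le.mpr hTgt)
      · exact h
    have hev : ∀ᶠ u in 𝓝[Ici 0] s, X u < r₀ :=
      (hXc s hs0).eventually (eventually_iff.mpr (Iio_mem_nhds hXs))
    rw [Filter.eventually_iff, Metric.mem_nhdsWithin_iff] at hev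
    obtain ⟨δ, hδ, hball⟩ := hev
    set u' := min T (s + δ/2) with hu'def
    have hsu' : s < u' := lt_min hsltT (by linarith)
    have hu'B : u' ∈ B := by
      refine ⟨⟨le_trans hs0 hsu'.le, min_le_left _ _⟩, fun u hu => ?_⟩
      rcases le_or_gt u s with h | h
      · exact hHs u ⟨hu.1, h⟩
      · refine le_of_lt (hball ⟨?_, hu.1⟩)
        rw [Metric.mem_ball, Real.dist_eq, abs_of_pos (by linarith : (0:ℝ) < u - s)]
        have : u ≤ s + δ/2 := le_trans hu.2 (min_le_right _ _)
        linarith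
    exact absurd (le_csSup hBbdd hu'B) (not_le.mpr hsu')
  -- conclusion
  refine ⟨hXbound, ?_⟩
  have hVbound : ∀ t : ℝ, 0 ≤ t → V t ≤ (1-c)^(⌊t/t₀⌋₊) * V 0 := by
    intro t ht
    set n := ⌊t/t₀⌋₊ with hn
    have hfl : (n:ℝ) ≤ t/t₀ := Nat.floor_le (div_nonneg ht ht₀.le)
    have hn1 : (n:ℝ)*t₀ ≤ t := by
      calc (n:ℝ)*t₀ ≤ (t/t₀)*t₀ := mul_le_mul_of_nonneg_right hfl ht₀.le
        _ = t := div_mul_cancel₀ t ht₀.ne'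
    have hd := hVdec n (fun u hu => hXbound u hu.1)
    exact le_trans (hVmono _ t (by positivity) hn1) hd
  have hg : Tendsto (fun t : ℝ => (1-c)^(⌊t/t₀⌋₊) * V 0) atTop (𝓝 0) := by
    have h1 : Tendsto (fun t : ℝ => ⌊t/t₀⌋₊) atTop atTop :=
      tendsto_nat_floor_atTop.comp (tendsto_id.atTop_div_const ht₀)
    have h2 : Tendsto (fun t : ℝ => (1-c)^(⌊t/t₀⌋₊)) atTop (𝓝 0) :=
      (tendsto_pow_atTop_nhds_zero_of_lt_one h1c (by linarith)).comp h1
    simpa using h2.mul_const (V 0)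
  refine squeeze_zero' ?_ ?_ hg
  · exact (eventually_ge_atTop (0:ℝ)).mono (fun t ht => hVnn t ht)
  · exact (eventually_ge_atTop (0:ℝ)).mono (fun t ht => hVbound t ht)
end

section
/- Let X, V : ℝ≥0 → ℝ≥0 be continuous, V nonincreasing, with X(t) ≤ X(0) + ∫_0^t V(s) ds and, for some constants c ∈ (0,1) and t₀ > 0 and r₀ ≥ X(0), suppose V(n·t₀) ≤ (1−c)^n V(0) for all n ∈ ℕ whenever sup_{s ≤ n t₀} X(s) ≤ r₀. If r₀ − X(0) > V(0)·t₀/c, then X(t) ≤ r₀ for all t and V(t) ≤ (1−c)^{⌊t/t₀⌋} V(0) for all t, so V(t) → 0 exponentially. -/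
open Set Filter

/-- Geometric-decay bootstrapping lemma: if `X(t) ≤ X(0) + ∫_0^t V`, `V` nonincreasing,
and `V(n t₀) ≤ (1−c)^n V(0)` whenever `X ≤ r₀` on `[0, n t₀]`, then the condition
`r₀ − X(0) > V(0) t₀ / c` implies `X ≤ r₀` everywhere and
`V(t) ≤ (1−c)^{⌊t/t₀⌋} V(0)`. -/
theorem stmt_14 (X V : ℝ → ℝ) (c t₀ r₀ : ℝ)
    (hXc : ContinuousOn X (Ici 0)) (hVc : ContinuousOn V (Ici 0))
    (hXnn : ∀ t, 0 ≤ t → 0 ≤ X t) (hVnn : ∀ t, 0 ≤ t → 0 ≤ V t)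
    (hVmono : ∀ s t, 0 ≤ s → s ≤ t → V t ≤ V s)
    (hXint : ∀ t, 0 ≤ t → X t ≤ X 0 + ∫ s in (0 : ℝ)..t, V s)
    (hc0 : 0 < c) (hc1 : c < 1) (ht₀ : 0 < t₀) (hr₀ : X 0 ≤ r₀)
    (hdecay : ∀ n : ℕ, (∀ s ∈ Icc (0 : ℝ) (n * t₀), X s ≤ r₀) →
      V (n * t₀) ≤ (1 - c) ^ n * V 0)
    (hcond : V 0 * t₀ / c < r₀ - X 0) :
    (∀ t, 0 ≤ t → X t ≤ r₀) ∧
      (∀ t, 0 ≤ t → V t ≤ (1 - c) ^ (⌊t / t₀⌋₊) * V 0) ∧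
      Tendsto V atTop (nhds 0) := by
  have hV0 : 0 ≤ V 0 := hVnn 0 le_rfl
  have h1c : 0 ≤ 1 - c := by linarith
  have h1c1 : 1 - c < 1 := by linarith
  have hVint : ∀ a b : ℝ, 0 ≤ a → a ≤ b → IntervalIntegrable V MeasureTheory.volume a b := by
    intro a b ha hab
    apply ContinuousOn.intervalIntegrable
    apply hVc.mono
    intro x hx
    rw [uIcc_of_le hab] at hx
    exact le_trans ha hx.1
  -- main induction
  have hQ : ∀ n : ℕ, ∀ s ∈ Icc (0:ℝ) (n * t₀), X s ≤ r₀ := by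
    intro n
    induction n with
    | zero =>
      intro s hs
      simp only [Nat.cast_zero, zero_mul] at hs
      have : s = 0 := le_antisymm hs.2 hs.1
      rw [this]; exact hr₀
    | succ n ih =>
      have hVk : ∀ k : ℕ, k ≤ n → V (k * t₀) ≤ (1 - c) ^ k * V 0 := by
        intro k hk
        apply hdecay k
        intro s hs
        apply ih s
        refine ⟨hs.1, hs.2.trans ?_⟩
        exact mul_le_mul_of_nonneg_right (by exact_mod_cast hk) ht₀.le
      intro s hs
      refine (hXint s hs.1).trans ?_
      have hsle : s ≤ ((n+1 : ℕ) : ℝ) * t₀ := by push_cast; push_cast at hs; linarith [hs.2]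
      have hint1 : ∫ u in (0:ℝ)..s, V u ≤ ∫ u in (0:ℝ)..(((n+1:ℕ):ℝ) * t₀), V u := by
        apply intervalIntegral.integral_mono_interval le_rfl hs.1 hsle
        · refine (MeasureTheory.ae_restrict_iff' measurableSet_Ioc).2 ?_
          exact Filter.Eventually.of_forall fun x hx => hVnn x hx.1.le
        · exact hVint 0 _ le_rfl (by positivity)
      have hsplit : ∑ k ∈ Finset.range (n+1), ∫ u in ((k:ℝ)*t₀)..(((k+1:ℕ):ℝ)*t₀), V u
          = ∫ u in (((0:ℕ):ℝ)*t₀)..(((n+1:ℕ):ℝ)*t₀), V u := by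
        apply intervalIntegral.sum_integral_adjacent_intervals
        intro k hk
        apply hVint
        · positivity
        · push_cast; nlinarith
      have hpiece : ∀ k : ℕ, k ≤ n →
          ∫ u in ((k:ℝ)*t₀)..(((k+1:ℕ):ℝ)*t₀), V u ≤ (1 - c) ^ k * V 0 * t₀ := by
        intro k hk
        have hab : (k:ℝ)*t₀ ≤ ((k+1:ℕ):ℝ)*t₀ := by push_cast; nlinarith
        have : ∫ u in ((k:ℝ)*t₀)..(((k+1:ℕ):ℝ)*t₀), V u
            ≤ ∫ _ in ((k:ℝ)*t₀)..(((k+1:ℕ):ℝ)*t₀), (1 - c) ^ k * V 0 := by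
          apply intervalIntegral.integral_mono_on hab
            (hVint _ _ (by positivity) hab) intervalIntegrable_const
          intro x hx
          calc V x ≤ V ((k:ℝ)*t₀) := hVmono _ _ (by positivity) hx.1
            _ ≤ (1 - c) ^ k * V 0 := hVk k hk
        refine this.trans ?_
        rw [intervalIntegral.integral_const, smul_eq_mul]
        have : ((k+1:ℕ):ℝ)*t₀ - (k:ℝ)*t₀ = t₀ := by push_cast; ring
        rw [this]; ring_nf; exact le_refl _
      have hgs : ∑ k ∈ Finset.range (n+1), (1 - c) ^ k ≤ 1 / c := by
        rw [geom_sum_eq (by linarith : (1:ℝ) - c ≠ 1)]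
        have h : ((1-c)^(n+1) - 1)/((1-c)-1) = (1 - (1-c)^(n+1))/c := by
          rw [show (1:ℝ)-c-1 = -c by ring, div_neg, ← neg_div]
          ring_nf
        rw [h, div_le_div_iff₀ hc0 hc0]
        have hpow : 0 ≤ (1 - c) ^ (n+1) := pow_nonneg h1c _
        nlinarith
      have hsum : ∑ k ∈ Finset.range (n+1), ((1 - c) ^ k * V 0 * t₀) ≤ V 0 * t₀ / c := by
        have : ∑ k ∈ Finset.range (n+1), ((1 - c) ^ k * V 0 * t₀)
            = (∑ k ∈ Finset.range (n+1), (1 - c) ^ k) * (V 0 * t₀) := by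
          rw [Finset.sum_mul]; apply Finset.sum_congr rfl; intros; ring
        rw [this]
        calc (∑ k ∈ Finset.range (n+1), (1 - c) ^ k) * (V 0 * t₀)
            ≤ (1 / c) * (V 0 * t₀) := by
              apply mul_le_mul_of_nonneg_right hgs (by positivity)
          _ = V 0 * t₀ / c := by ring
      have hintle : ∫ u in (0:ℝ)..s, V u ≤ V 0 * t₀ / c := by
        calc ∫ u in (0:ℝ)..s, V u ≤ ∫ u in (((0:ℕ):ℝ)*t₀)..(((n+1:ℕ):ℝ)*t₀), V u := by
              simpa using hint1
          _ = ∑ k ∈ Finset.range (n+1), ∫ u in ((k:ℝ)*t₀)..(((k+1:ℕ):ℝ)*t₀), V u := hsplit.symm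
          _ ≤ ∑ k ∈ Finset.range (n+1), ((1 - c) ^ k * V 0 * t₀) := by
              apply Finset.sum_le_sum
              intro k hk
              exact hpiece k (Nat.lt_succ_iff.mp (Finset.mem_range.mp hk))
          _ ≤ V 0 * t₀ / c := hsum
      linarith
  have hX : ∀ t, 0 ≤ t → X t ≤ r₀ := by
    intro t ht
    obtain ⟨n, hn⟩ := exists_nat_ge (t / t₀)
    apply hQ n t
    constructor
    · exact ht
    · rw [div_le_iff₀ ht₀] at hn; linarith
  have hVb : ∀ t, 0 ≤ t → V t ≤ (1 - c) ^ (⌊t / t₀⌋₊) * V 0 := by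
    intro t ht
    set n := ⌊t / t₀⌋₊ with hn
    have hnt : (n:ℝ) * t₀ ≤ t := by
      rw [← le_div_iff₀ ht₀]
      exact Nat.floor_le (by positivity)
    calc V t ≤ V ((n:ℝ) * t₀) := hVmono _ _ (by positivity) hnt
      _ ≤ (1 - c) ^ n * V 0 := hdecay n (fun s hs => hQ n s hs)
  refine ⟨hX, hVb, ?_⟩
  apply squeeze_zero'
  · filter_upwards [eventually_ge_atTop (0:ℝ)] with t ht
    exact hVnn t ht
  · filter_upwards [eventually_ge_atTop (0:ℝ)] with t ht
    exact hVb t ht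
  · have h1 : Tendsto (fun t : ℝ => ⌊t / t₀⌋₊) atTop atTop :=
      (tendsto_nat_floor_atTop).comp (tendsto_id.atTop_div_const ht₀)
    have h2 : Tendsto (fun n : ℕ => (1 - c) ^ n * V 0) atTop (nhds 0) := by
      have := (tendsto_pow_atTop_nhds_zero_of_lt_one h1c h1c1).mul_const (V 0)
      simpa using this
    exact h2.comp h1
end

section
/- Let A be an N×N nonnegative matrix, α > 0, ψ : ℝ≥0 → (0,1] decreasing, and define χ(A) = min over i ≠ j of (A_{ij} + A_{ji} + ∑_{k ≠ i,j} min(A_{ik}, A_{jk})). Suppose (x_i, v_i) solve the Cucker–Smale system x_i' = v_i, v_i'(t) = α ∑_j A_{ij} ψ(‖x_j − x_i‖₂)(v_j − v_i), and set X(t) = sup_{i,j} ‖x_i(t) − x_j(t)‖₂, V(t) = sup_{i,j} ‖v_i(t) − v_j(t)‖₂. If V(0) < α·χ(A)·∫_{X(0)}^∞ ψ(r) dr, then sup_t X(t) < ∞ and V(t) → 0 (flocking occurs). -/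
/-
Along a diametral pair `(i, j)` of velocities every other velocity lies in the slab between
`v j` and `v i`, so each agent `k` pulls `v i` and `v j` together at rate at least
`α ψ(X) min (A i k) (A j k)`. Hence the velocity diameter satisfies `D⁺V ≤ -α χ(A) ψ(X) V`
while `D⁺X ≤ V`, where `D⁺` is the upper right Dini derivative (the diameters are only maxima
of smooth functions). So `V + α χ(A) ∫_{X(0)}^{X} ψ` is nonincreasing; by the hypothesis this
keeps `X` below a level `Y` with `V(0) < α χ(A) ∫_{X(0)}^{Y} ψ`, and then `ψ(X) ≥ ψ(Y) > 0`
turns the velocity inequality into exponential decay of `V` (Grönwall).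
-/

open MeasureTheory Set Finset Filter

/-- Scrambling coefficient `χ(A) = min_{i≠j} (A i j + A j i + ∑_{k≠i,j} min (A i k) (A j k))`. -/
noncomputable def scramblingCoeff {N : ℕ} (A : Matrix (Fin N) (Fin N) ℝ) : ℝ :=
  ⨅ p : {p : Fin N × Fin N // p.1 ≠ p.2},
    (A p.1.1 p.1.2 + A p.1.2 p.1.1 +
      ∑ k ∈ Finset.univ \ {p.1.1, p.1.2}, min (A p.1.1 k) (A p.1.2 k))

open scoped RealInnerProductSpace Topology

def UpperDiniLE (f : ℝ → ℝ) (x b : ℝ) : Prop :=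
  ∀ r, b < r → ∀ᶠ z in 𝓝[>] x, slope f x z < r

namespace UpperDiniLE

variable {f g : ℝ → ℝ} {x b c : ℝ}

theorem mono (hf : UpperDiniLE f x b) (hbc : b ≤ c) : UpperDiniLE f x c :=
  fun r hr => hf r (hbc.trans_lt hr)

theorem add (hf : UpperDiniLE f x b) (hg : UpperDiniLE g x c) :
    UpperDiniLE (fun t => f t + g t) x (b + c) := by
  intro r hr
  filter_upwards [hf (b + (r - b - c) / 2) (by linarith),
    hg (c + (r - b - c) / 2) (by linarith)] with z hfz hgz
  have hsum : slope (fun t => f t + g t) x z = slope f x z + slope g x z := by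
    simp only [slope_def_field]
    ring
  linarith

theorem comp (hf : UpperDiniLE f x b) (hb : 0 ≤ b) {L : ℝ} (hL : 0 ≤ L)
    (hg : ∀ z, g (f z) - g (f x) ≤ L * max (f z - f x) 0) :
    UpperDiniLE (fun t => g (f t)) x (L * b) := by
  intro r hr
  set ε := (r - L * b) / (L + 1)
  have hε : 0 < ε := div_pos (by linarith) (by linarith)
  have hLε : (L + 1) * ε = r - L * b := mul_div_cancel₀ _ (by linarith)
  filter_upwards [hf (b + ε) (by linarith), self_mem_nhdsWithin] with z hz hxz
  have hzx : 0 < z - x := sub_pos.2 hxz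
  rw [slope_def_field, div_lt_iff₀ hzx] at hz ⊢
  calc g (f z) - g (f x) ≤ L * max (f z - f x) 0 := hg z
    _ ≤ L * ((b + ε) * (z - x)) := by
        gcongr
        exact max_le hz.le (by positivity)
    _ < r * (z - x) := by
        rw [← mul_assoc]
        refine mul_lt_mul_of_pos_right ?_ hzx
        nlinarith

theorem ciSup {ι : Type*} [Finite ι] [Nonempty ι] {f : ι → ℝ → ℝ}
    (hc : ∀ i, ContinuousAt (f i) x) (h : ∀ i, f i x = ⨆ j, f j x → UpperDiniLE (f i) x b) :
    UpperDiniLE (fun t => ⨆ i, f i t) x b := by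
  intro r hr
  have key : ∀ i, ∀ᶠ z in 𝓝[>] x, f i z < (⨆ j, f j x) + r * (z - x) := by
    intro i
    by_cases hi : f i x = ⨆ j, f j x
    · filter_upwards [h i hi r hr, self_mem_nhdsWithin] with z hz hxz
      rw [slope_def_field, div_lt_iff₀ (sub_pos.2 hxz)] at hz
      linarith
    · have hlt : f i x < ⨆ j, f j x :=
        lt_of_le_of_ne (le_ciSup (f := fun j => f j x) (Finite.bddAbove_range _) i) hi
      have hline : Tendsto (fun z => (⨆ j, f j x) + r * (z - x)) (𝓝[>] x)
          (𝓝 (⨆ j, f j x)) := by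
        refine Tendsto.mono_left ?_ nhdsWithin_le_nhds
        simpa using ((continuous_sub_right x).const_mul r |>.const_add (⨆ j, f j x)).tendsto x
      exact ((hc i).tendsto.mono_left nhdsWithin_le_nhds).eventually_lt hline hlt
  filter_upwards [Filter.eventually_all.2 key, self_mem_nhdsWithin] with z hz hxz
  obtain ⟨i, hi⟩ := exists_eq_ciSup_of_finite (f := fun i => f i z)
  rw [slope_def_field, div_lt_iff₀ (sub_pos.2 hxz), ← hi]
  linarith [hz i]

end UpperDiniLE

theorem HasDerivAt.upperDiniLE {f : ℝ → ℝ} {f' x : ℝ} (hf : HasDerivAt f f' x) :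
    UpperDiniLE f x f' := fun _ hr =>
  ((hasDerivAt_iff_tendsto_slope.1 hf).mono_left
    (nhdsWithin_mono x fun _ hz => ne_of_gt hz)).eventually_lt_const hr

theorem HasDerivAt.upperDiniLE_norm {E : Type*} [NormedAddCommGroup E] [NormedSpace ℝ E]
    {u : ℝ → E} {u' : E} {x : ℝ} (hu : HasDerivAt u u' x) :
    UpperDiniLE (fun t => ‖u t‖) x ‖u'‖ := by
  intro r hr
  have hslope : Tendsto (slope u x) (𝓝[>] x) (𝓝 u') :=
    (hasDerivAt_iff_tendsto_slope.1 hu).mono_left (nhdsWithin_mono x fun _ hz => ne_of_gt hz)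
  filter_upwards [hslope.norm.eventually_lt_const hr, self_mem_nhdsWithin] with z hz hxz
  have hzx : 0 < z - x := sub_pos.2 hxz
  calc slope (fun t => ‖u t‖) x z = (‖u z‖ - ‖u x‖) / (z - x) := slope_def_field _ _ _
    _ ≤ ‖u z - u x‖ / (z - x) := by gcongr; exact norm_sub_norm_le _ _
    _ = ‖slope u x z‖ := by
        rw [slope_def_module, norm_smul, norm_inv, Real.norm_of_nonneg hzx.le, div_eq_inv_mul]
    _ < r := hz

theorem HasDerivAt.norm {E : Type*} [NormedAddCommGroup E] [InnerProductSpace ℝ E]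
    {u : ℝ → E} {u' : E} {x : ℝ} (hu : HasDerivAt u u' x) (h0 : u x ≠ 0) :
    HasDerivAt (fun t => ‖u t‖) (⟪u x, u'⟫ / ‖u x‖) x := by
  have hsqrt := (Real.hasDerivAt_sqrt (pow_ne_zero 2 (norm_ne_zero_iff.2 h0))).comp x hu.norm_sq
  rw [Real.sqrt_sq (norm_nonneg _)] at hsqrt
  have hfun : (fun t => ‖u t‖) = (fun y => √y) ∘ fun t => ‖u t‖ ^ 2 :=
    funext fun t => (Real.sqrt_sq (norm_nonneg _)).symm
  rw [hfun]
  refine hsqrt.congr_deriv ?_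
  field_simp

theorem le_mul_exp_of_upperDiniLE {f : ℝ → ℝ} {K : ℝ} (hf : Continuous f)
    (h : ∀ x, 0 ≤ x → UpperDiniLE f x (K * f x)) {t : ℝ} (ht : 0 ≤ t) :
    f t ≤ f 0 * Real.exp (K * t) := by
  have := le_gronwallBound_of_liminf_deriv_right_le (f' := fun x => K * f x) (ε := 0)
    hf.continuousOn (fun x hx r hr => (h x hx.1 r hr).frequently) le_rfl
    (fun x _ => (add_zero _).ge) t ⟨ht, le_rfl⟩
  simpa [gronwallBound_ε0] using this

section Spread

variable {ι E : Type*} [NormedAddCommGroup E]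

noncomputable def spread (y : ι → E) : ℝ := ⨆ i, ⨆ j, ‖y i - y j‖

theorem spread_nonneg (y : ι → E) : 0 ≤ spread y :=
  Real.iSup_nonneg fun _ => Real.iSup_nonneg fun _ => norm_nonneg _

variable [Finite ι]

theorem spread_eq_ciSup_prod (y : ι → E) : spread y = ⨆ p : ι × ι, ‖y p.1 - y p.2‖ :=
  (Finite.ciSup_prod fun p : ι × ι => ‖y p.1 - y p.2‖).symm

theorem norm_sub_le_spread (y : ι → E) (i j : ι) : ‖y i - y j‖ ≤ spread y := by
  rw [spread_eq_ciSup_prod]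
  exact le_ciSup (f := fun p : ι × ι => ‖y p.1 - y p.2‖) (Finite.bddAbove_range _) (i, j)

variable [Nonempty ι] {u : ι → ℝ → E}

theorem continuous_spread (hu : ∀ i, Continuous (u i)) : Continuous fun t => spread (u · t) := by
  have : Fintype ι := Fintype.ofFinite ι
  simp only [spread_eq_ciSup_prod, ← Finset.sup'_univ_eq_ciSup]
  exact Continuous.finset_sup'_apply _ fun p _ => ((hu p.1).sub (hu p.2)).norm

theorem upperDiniLE_spread {s b : ℝ} (hu : ∀ i, Continuous (u i))
    (h : ∀ i j, ‖u i s - u j s‖ = spread (u · s) →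
      UpperDiniLE (fun t => ‖u i t - u j t‖) s b) :
    UpperDiniLE (fun t => spread (u · t)) s b := by
  simp only [spread_eq_ciSup_prod] at h ⊢
  exact UpperDiniLE.ciSup (fun p => ((hu p.1).sub (hu p.2)).norm.continuousAt)
    fun p hp => h p.1 p.2 hp

theorem upperDiniLE_spread_of_hasDerivAt [NormedSpace ℝ E] {u' : ι → ℝ → E}
    (hu : ∀ i t, HasDerivAt (u i) (u' i t) t) (s : ℝ) :
    UpperDiniLE (fun t => spread (u · t)) s (spread (u' · s)) :=
  upperDiniLE_spread (fun i => continuous_iff_continuousAt.2 fun t => (hu i t).continuousAt)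
    fun i j _ => ((hu i s).sub (hu j s)).upperDiniLE_norm.mono (norm_sub_le_spread (u' · s) i j)

end Spread

def consensusForce {ι E : Type*} [Fintype ι] [AddCommGroup E] [Module ℝ E] (a : ι → ι → ℝ)
    (w : ι → E) (i : ι) : E :=
  ∑ k, a i k • (w k - w i)

section Consensus

variable {ι E : Type*} [Fintype ι] [DecidableEq ι] [NormedAddCommGroup E]
  [InnerProductSpace ℝ E]

def pairCoupling (a : ι → ι → ℝ) (i j : ι) : ℝ :=
  a i j + a j i + ∑ k ∈ Finset.univ \ {i, j}, min (a i k) (a j k)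

theorem mul_pairCoupling_le {a b : ι → ι → ℝ} {c : ℝ} (hc : 0 ≤ c)
    (hab : ∀ k l, c * a k l ≤ b k l) (i j : ι) :
    c * pairCoupling a i j ≤ pairCoupling b i j := by
  unfold pairCoupling
  rw [mul_add, mul_add, Finset.mul_sum]
  gcongr ?_ + ?_ + ?_
  · exact hab i j
  · exact hab j i
  · refine Finset.sum_le_sum fun k _ => ?_
    rw [mul_min_of_nonneg _ _ hc]
    exact min_le_min (hab _ _) (hab _ _)

theorem inner_consensusForce_sub_le {a : ι → ι → ℝ} {w : ι → E} {i j : ι} (hij : i ≠ j)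
    (hmax : ∀ k l, ‖w k - w l‖ ≤ ‖w i - w j‖) :
    ⟪w i - w j, consensusForce a w i - consensusForce a w j⟫ ≤
      -(pairCoupling a i j * ‖w i - w j‖ ^ 2) := by
  set u := w i - w j
  set p : ι → ℝ := fun k => ⟪u, w k - w i⟫
  set q : ι → ℝ := fun k => ⟪u, w k - w j⟫
  have hpq : ∀ k, p k = q k - ‖u‖ ^ 2 := fun k => by
    simp only [p, q, u, ← real_inner_self_eq_norm_sq, ← inner_sub_right]
    congr 1
    abel
  -- `(i, j)` is a diametral pair, so every `w k` lies in the slab between `w j` and `w i`.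
  have hp : ∀ k, p k ≤ 0 := fun k => by
    have h1 := real_inner_le_norm u (w k - w j)
    have h2 := mul_le_mul_of_nonneg_left (hmax k j) (norm_nonneg u)
    rw [hpq]
    nlinarith
  have hq : ∀ k, 0 ≤ q k := fun k => by
    have h1 := neg_le_of_abs_le (abs_real_inner_le_norm u (w k - w i))
    have h2 := mul_le_mul_of_nonneg_left (hmax k i) (norm_nonneg u)
    have := hpq k
    simp only [p] at this
    nlinarith
  have hterm : ∀ k, a i k * p k - a j k * q k ≤ -(min (a i k) (a j k) * ‖u‖ ^ 2) :=
    fun k => by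
      have h1 := mul_le_mul_of_nonpos_right (min_le_left (a i k) (a j k)) (hp k)
      have h2 := mul_le_mul_of_nonneg_right (min_le_right (a i k) (a j k)) (hq k)
      rw [hpq] at h1 ⊢
      linarith
  have hexpand : ⟪u, consensusForce a w i - consensusForce a w j⟫ =
      ∑ k, (a i k * p k - a j k * q k) := by
    simp only [consensusForce, ← Finset.sum_sub_distrib, inner_sum, inner_sub_right,
      real_inner_smul_right, p, q]
  have hpi : p i = 0 := by simp [p]
  have hqj : q j = 0 := by simp [q]
  have hqi : q i = ‖u‖ ^ 2 := by linarith [hpq i]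
  have hrest := Finset.sum_le_sum fun k (_ : k ∈ Finset.univ \ {i, j}) => hterm k
  rw [Finset.sum_neg_distrib, ← Finset.sum_mul] at hrest
  rw [hexpand, ← Finset.sum_sdiff (Finset.subset_univ {i, j}), Finset.sum_pair hij, hpi, hqi,
    hpq j, hqj, pairCoupling]
  linarith

end Consensus

theorem scramblingCoeff_le_pairCoupling {N : ℕ} (A : Matrix (Fin N) (Fin N) ℝ) {i j : Fin N}
    (hij : i ≠ j) : scramblingCoeff A ≤ pairCoupling A i j :=
  ciInf_le (f := fun p : {p : Fin N × Fin N // p.1 ≠ p.2} => pairCoupling A p.1.1 p.1.2)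
    (Finite.bddBelow_range _) ⟨(i, j), hij⟩

section CuckerSmale

variable {ι E : Type*} [Fintype ι] [DecidableEq ι] [NormedAddCommGroup E]
  [InnerProductSpace ℝ E]
  {α κ : ℝ} {A : ι → ι → ℝ} {ψ : ℝ → ℝ}

theorem inner_cuckerSmale_sub_le (hα : 0 ≤ α) (hA : ∀ k l, 0 ≤ A k l)
    (hψ : AntitoneOn ψ (Ici 0)) (hψ0 : ∀ r, 0 ≤ r → 0 ≤ ψ r) {y w : ι → E} {i j : ι}
    (hij : i ≠ j) (hκ : κ ≤ pairCoupling A i j) (hmax : ‖w i - w j‖ = spread w) :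
    ⟪w i - w j, consensusForce (fun k l => α * A k l * ψ ‖y l - y k‖) w i -
        consensusForce (fun k l => α * A k l * ψ ‖y l - y k‖) w j⟫ ≤
      -(α * κ * ψ (spread y) * ‖w i - w j‖ ^ 2) := by
  have hψy : 0 ≤ α * ψ (spread y) := mul_nonneg hα (hψ0 _ (spread_nonneg y))
  have hweight : ∀ k l, α * ψ (spread y) * A k l ≤ α * A k l * ψ ‖y l - y k‖ := fun k l => by
    have := hψ (mem_Ici.2 (norm_nonneg _)) (mem_Ici.2 (spread_nonneg y))
      (norm_sub_le_spread y l k)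
    nlinarith [mul_nonneg hα (hA k l)]
  have hcoupling :
      α * ψ (spread y) * κ ≤ pairCoupling (fun k l => α * A k l * ψ ‖y l - y k‖) i j :=
    (mul_le_mul_of_nonneg_left hκ hψy).trans (mul_pairCoupling_le hψy hweight i j)
  refine (inner_consensusForce_sub_le hij fun k l => hmax ▸ norm_sub_le_spread w k l).trans ?_
  have := mul_le_mul_of_nonneg_right hcoupling (sq_nonneg ‖w i - w j‖)
  linarith

theorem upperDiniLE_velocity_spread [Nonempty ι] (hα : 0 ≤ α) (hA : ∀ k l, 0 ≤ A k l)
    (hψ : AntitoneOn ψ (Ici 0)) (hψ0 : ∀ r, 0 ≤ r → 0 ≤ ψ r)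
    (hκ : ∀ i j, i ≠ j → κ ≤ pairCoupling A i j) {x v : ι → ℝ → E}
    (hv : ∀ i t, HasDerivAt (v i)
      (consensusForce (fun k l => α * A k l * ψ ‖x l t - x k t‖) (v · t) i) t) (s : ℝ) :
    UpperDiniLE (fun t => spread (v · t)) s
      (-(α * κ * ψ (spread (x · s)) * spread (v · s))) := by
  refine upperDiniLE_spread (fun i => continuous_iff_continuousAt.2 fun t => (hv i t).continuousAt)
    fun i j hmax => ?_
  have hu : HasDerivAt (fun t => v i t - v j t) _ s := (hv i s).sub (hv j s)
  rcases (spread_nonneg (v · s)).eq_or_lt with h0 | hpos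
  · have hsame : ∀ k l, v k s - v l s = 0 := fun k l =>
      norm_eq_zero.1 (le_antisymm (h0 ▸ norm_sub_le_spread (v · s) k l) (norm_nonneg _))
    refine hu.upperDiniLE_norm.mono ?_
    simp [consensusForce, hsame, ← h0]
  · have hne : v i s - v j s ≠ 0 := fun h => by rw [h, norm_zero] at hmax; linarith
    have hij : i ≠ j := fun h => hne (by rw [h, sub_self])
    refine (hu.norm hne).upperDiniLE.mono ?_
    rw [div_le_iff₀ (norm_pos_iff.2 hne)]
    have := inner_cuckerSmale_sub_le hα hA hψ hψ0 hij (hκ i j hij) (w := (v · s)) (y := (x · s))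
      hmax
    rw [← hmax]
    linarith

end CuckerSmale

section Primitive

variable {ψ : ℝ → ℝ} (hψ : AntitoneOn ψ (Ici 0)) (hψ0 : ∀ r, 0 ≤ r → 0 ≤ ψ r)
include hψ

theorem intervalIntegrable_of_antitoneOn {a b : ℝ} (ha : 0 ≤ a) (hb : 0 ≤ b) :
    IntervalIntegrable ψ volume a b :=
  (hψ.mono fun _ hr => le_trans (le_min ha hb) hr.1).intervalIntegrable

include hψ0

theorem integral_sub_integral_le_of_antitoneOn {a y z : ℝ} (ha : 0 ≤ a) (hy : 0 ≤ y)
    (hz : 0 ≤ z) : (∫ r in a..z, ψ r) - ∫ r in a..y, ψ r ≤ ψ y * max (z - y) 0 := by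
  rw [intervalIntegral.integral_interval_sub_left (intervalIntegrable_of_antitoneOn hψ ha hz)
    (intervalIntegrable_of_antitoneOn hψ ha hy)]
  rcases le_total y z with hyz | hzy
  · rw [max_eq_left (sub_nonneg.2 hyz), mul_comm, ← smul_eq_mul,
      ← intervalIntegral.integral_const]
    exact intervalIntegral.integral_mono_on hyz (intervalIntegrable_of_antitoneOn hψ hy hz)
      intervalIntegrable_const fun r hr => hψ hy (hy.trans hr.1) hr.1
  · rw [max_eq_right (sub_nonpos.2 hzy), mul_zero, intervalIntegral.integral_symm, neg_nonpos]
    exact intervalIntegral.integral_nonneg hzy fun r hr => hψ0 r (hz.trans hr.1)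

theorem lipschitzOnWith_primitive_of_antitoneOn {a : ℝ} (ha : 0 ≤ a) :
    LipschitzOnWith (Real.toNNReal (ψ 0)) (fun y => ∫ r in a..y, ψ r) (Ici 0) := by
  refine LipschitzOnWith.of_dist_le_mul fun z hz y hy => ?_
  have hbound : ∀ y z : ℝ, 0 ≤ y → ψ y * max (z - y) 0 ≤ ψ 0 * |z - y| := fun y z hy =>
    mul_le_mul (hψ (le_refl (0 : ℝ)) hy hy) (max_le (le_abs_self _) (abs_nonneg _))
      (le_max_right _ _) (hψ0 0 le_rfl)
  rw [Real.dist_eq, Real.dist_eq, Real.coe_toNNReal _ (hψ0 0 le_rfl), abs_le]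
  have h1 := integral_sub_integral_le_of_antitoneOn hψ hψ0 ha hy hz
  have h2 := integral_sub_integral_le_of_antitoneOn hψ hψ0 ha hz hy
  have h3 := hbound y z hy
  have h4 := hbound z y hz
  rw [abs_sub_comm] at h4
  constructor <;> linarith

theorem exists_lt_mul_intervalIntegral {a c V : ℝ} (ha : 0 ≤ a)
    (h : ENNReal.ofReal V < ENNReal.ofReal c * ∫⁻ r in Ioi a, ENNReal.ofReal (ψ r)) :
    ∃ b, a ≤ b ∧ V < c * ∫ r in a..b, ψ r := by
  have hmeas : AEMeasurable (fun r => ENNReal.ofReal (ψ r)) (volume.restrict (Ioi a)) :=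
    (aemeasurable_restrict_of_antitoneOn measurableSet_Ioi
      (hψ.mono fun _ hr => ha.trans (le_of_lt hr))).ennreal_ofReal
  have htends := ENNReal.Tendsto.const_mul
    ((aecover_Iic (b := fun b => b) tendsto_id).lintegral_tendsto_of_countably_generated hmeas)
    (Or.inr ENNReal.ofReal_ne_top) (a := ENNReal.ofReal c)
  obtain ⟨b, hb, hab⟩ :=
    ((htends.eventually (lt_mem_nhds h)).and (eventually_ge_atTop a)).exists
  refine ⟨b, hab, ?_⟩
  have hint : 0 ≤ ∫ r in a..b, ψ r :=
    intervalIntegral.integral_nonneg hab fun r hr => hψ0 r (ha.trans hr.1)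
  rw [Measure.restrict_restrict measurableSet_Iic, inter_comm, Ioi_inter_Iic,
    ← ofReal_integral_eq_lintegral_ofReal
      ((intervalIntegrable_iff_integrableOn_Ioc_of_le hab).1
        (intervalIntegrable_of_antitoneOn hψ ha (ha.trans hab)))
      ((ae_restrict_iff' measurableSet_Ioc).2 (ae_of_all _ fun r hr => hψ0 r (ha.trans hr.1.le))),
    ← intervalIntegral.integral_of_le hab, ← ENNReal.ofReal_mul' hint,
    ENNReal.ofReal_lt_ofReal_iff'] at hb
  exact hb.1

end Primitive

section Flocking

variable {X V ψ : ℝ → ℝ} {c : ℝ} (hX : Continuous X) (hV : Continuous V)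
  (hX0 : ∀ t, 0 ≤ X t) (hV0 : ∀ t, 0 ≤ V t) (hψ : AntitoneOn ψ (Ici 0))
  (hXV : ∀ s, UpperDiniLE X s (V s)) (hVX : ∀ s, UpperDiniLE V s (-(c * ψ (X s) * V s)))
include hX hV hX0 hV0 hψ hXV hVX

theorem add_mul_integral_le (hψ0 : ∀ r, 0 ≤ r → 0 ≤ ψ r) (hc : 0 ≤ c) {t : ℝ}
    (ht : 0 ≤ t) :
    V t + c * ∫ r in X 0..X t, ψ r ≤ V 0 := by
  have hG : ∀ s z, c * (∫ r in X 0..X z, ψ r) - c * (∫ r in X 0..X s, ψ r) ≤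
      c * ψ (X s) * max (X z - X s) 0 := fun s z => by
    rw [← mul_sub, mul_assoc]
    exact mul_le_mul_of_nonneg_left
      (integral_sub_integral_le_of_antitoneOn hψ hψ0 (hX0 0) (hX0 s) (hX0 z)) hc
  have hcont : Continuous fun t => V t + c * ∫ r in X 0..X t, ψ r :=
    hV.add (continuous_const.mul
      ((lipschitzOnWith_primitive_of_antitoneOn hψ hψ0 (hX0 0)).continuousOn.comp_continuous hX
        hX0))
  have hdini : ∀ s, 0 ≤ s → UpperDiniLE (fun t => V t + c * ∫ r in X 0..X t, ψ r) s
      (0 * (V s + c * ∫ r in X 0..X s, ψ r)) := fun s _ =>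
    ((hVX s).add ((hXV s).comp (g := fun y => c * ∫ r in X 0..y, ψ r) (hV0 s)
      (mul_nonneg hc (hψ0 _ (hX0 s))) (hG s))).mono (le_of_eq (by ring))
  simpa using le_mul_exp_of_upperDiniLE hcont hdini ht

theorem flocking_of_upperDiniLE (hψpos : ∀ r, 0 ≤ r → 0 < ψ r)
    (hcond : ENNReal.ofReal (V 0) <
      ENNReal.ofReal c * ∫⁻ r in Ioi (X 0), ENNReal.ofReal (ψ r)) :
    (∃ M : ℝ, ∀ t, 0 ≤ t → X t ≤ M) ∧ Tendsto V atTop (𝓝 0) := by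
  have hψ0 : ∀ r, 0 ≤ r → 0 ≤ ψ r := fun r hr => (hψpos r hr).le
  obtain ⟨Y, hXY, hY⟩ := exists_lt_mul_intervalIntegral hψ hψ0 (hX0 0) hcond
  have hc : 0 < c := pos_of_mul_pos_left ((hV0 0).trans_lt hY)
    (intervalIntegral.integral_nonneg hXY fun r hr => hψ0 r ((hX0 0).trans hr.1))
  have hbound : ∀ t, 0 ≤ t → X t ≤ Y := fun t ht => by
    by_contra! hlt
    have hlyap := add_mul_integral_le hX hV hX0 hV0 hψ hXV hVX hψ0 hc.le ht
    have hmono :=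
      integral_sub_integral_le_of_antitoneOn hψ hψ0 (hX0 0) (hX0 t) ((hX0 0).trans hXY)
    rw [max_eq_right (by linarith), mul_zero, sub_nonpos] at hmono
    nlinarith [hV0 t]
  refine ⟨⟨Y, hbound⟩, ?_⟩
  have hdecay : ∀ t, 0 ≤ t → V t ≤ V 0 * Real.exp (-(c * ψ Y) * t) :=
    fun t => le_mul_exp_of_upperDiniLE hV fun s hs => (hVX s).mono <| by
      have := hψ (hX0 s) ((hX0 s).trans (hbound s hs)) (hbound s hs)
      nlinarith [mul_le_mul_of_nonneg_right (mul_le_mul_of_nonneg_left this hc.le) (hV0 s)]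
  have hexp : Tendsto (fun t => V 0 * Real.exp (-(c * ψ Y) * t)) atTop (𝓝 0) := by
    simpa using (Real.tendsto_exp_neg_atTop_nhds_zero.comp
      (tendsto_id.const_mul_atTop (mul_pos hc (hψpos Y ((hX0 0).trans hXY))))).const_mul (V 0)
  exact squeeze_zero' (Eventually.of_forall hV0)
    ((eventually_ge_atTop 0).mono hdecay) hexp

end Flocking

theorem stmt_15_general (N d : ℕ) (hN : 2 ≤ N) (α : ℝ) (hα : 0 < α)
    (A : Matrix (Fin N) (Fin N) ℝ) (hAnn : ∀ i j, 0 ≤ A i j)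
    (ψ : ℝ → ℝ) (hψpos : ∀ r, 0 ≤ r → 0 < ψ r)
    (hψdec : ∀ r s, 0 ≤ r → r ≤ s → ψ s ≤ ψ r)
    (x v : Fin N → ℝ → EuclideanSpace ℝ (Fin d))
    (hx : ∀ i t, HasDerivAt (x i) (v i t) t)
    (hv : ∀ i t, HasDerivAt (v i)
      (∑ j, (α * A i j * ψ ‖x j t - x i t‖) • (v j t - v i t)) t)
    (X V : ℝ → ℝ)
    (hX : ∀ t, X t = ⨆ i : Fin N, ⨆ j : Fin N, ‖x i t - x j t‖)
    (hV : ∀ t, V t = ⨆ i : Fin N, ⨆ j : Fin N, ‖v i t - v j t‖)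
    (hcond : ENNReal.ofReal (V 0) <
      ENNReal.ofReal (α * scramblingCoeff A) *
        ∫⁻ r in Ioi (X 0), ENNReal.ofReal (ψ r)) :
    (∃ M : ℝ, ∀ t, 0 ≤ t → X t ≤ M) ∧ Tendsto V atTop (nhds 0) := by
  have : Nonempty (Fin N) := ⟨⟨0, by omega⟩⟩
  have hψ : AntitoneOn ψ (Ici 0) := fun r hr s _ hrs => hψdec r s hr hrs
  have hψ0 : ∀ r, 0 ≤ r → 0 ≤ ψ r := fun r hr => (hψpos r hr).le
  obtain rfl : X = fun t => spread (x · t) := funext hX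
  obtain rfl : V = fun t => spread (v · t) := funext hV
  have hxc : ∀ i, Continuous (x i) := fun i =>
    continuous_iff_continuousAt.2 fun t => (hx i t).continuousAt
  have hvc : ∀ i, Continuous (v i) := fun i =>
    continuous_iff_continuousAt.2 fun t => (hv i t).continuousAt
  exact flocking_of_upperDiniLE (continuous_spread hxc) (continuous_spread hvc)
    (fun _ => spread_nonneg _) (fun _ => spread_nonneg _) hψ (upperDiniLE_spread_of_hasDerivAt hx)
    (upperDiniLE_velocity_spread hα.le hAnn hψ hψ0
      (fun _ _ => scramblingCoeff_le_pairCoupling A) hv) hψpos hcond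

/-- Flocking for the Cucker–Smale model under the scrambling assumption: if
`V(0) < α χ(A) ∫_{X(0)}^∞ ψ(r) dr`, then the position diameter stays bounded and the
velocity diameter tends to `0`. -/
theorem stmt_15 (N d : ℕ) (hN : 2 ≤ N) (α : ℝ) (hα : 0 < α)
    (A : Matrix (Fin N) (Fin N) ℝ) (hAnn : ∀ i j, 0 ≤ A i j) (hAdiag : ∀ i, A i i = 0)
    (ψ : ℝ → ℝ) (hψpos : ∀ r, 0 ≤ r → 0 < ψ r) (hψle : ∀ r, 0 ≤ r → ψ r ≤ 1)
    (hψdec : ∀ r s, 0 ≤ r → r ≤ s → ψ s ≤ ψ r)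
    (x v : Fin N → ℝ → EuclideanSpace ℝ (Fin d))
    (hx : ∀ i t, HasDerivAt (x i) (v i t) t)
    (hv : ∀ i t, HasDerivAt (v i)
      (∑ j, (α * A i j * ψ ‖x j t - x i t‖) • (v j t - v i t)) t)
    (X V : ℝ → ℝ)
    (hX : ∀ t, X t = ⨆ i : Fin N, ⨆ j : Fin N, ‖x i t - x j t‖)
    (hV : ∀ t, V t = ⨆ i : Fin N, ⨆ j : Fin N, ‖v i t - v j t‖)
    (hcond : ENNReal.ofReal (V 0) <
      ENNReal.ofReal (α * scramblingCoeff A) *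
        ∫⁻ r in Ioi (X 0), ENNReal.ofReal (ψ r)) :
    (∃ M : ℝ, ∀ t, 0 ≤ t → X t ≤ M) ∧ Tendsto V atTop (nhds 0) :=
  stmt_15_general N d hN α hα A hAnn ψ hψpos hψdec x v hx hv X V hX hV hcond
end

section
/- Let β > 1, X₀ ≥ 0, and a, A > 0. The equation (1 − β)r² + βX₀r + 1 = −(A/a)(1 + r²)^{1−β/2} has a unique solution r* on [X₀, ∞). Moreover, if β = 2, then r* = X₀ + √(X₀² + 1 + A/a). -/
/-!
Multiplying by `(1 + r²)^(β/2 - 1)` turns the equation into `g r = -A/a` for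
`g r = scaledQuadratic β X₀ r = ((1 - β) r² + β X₀ r + 1) (1 + r²)^(β/2 - 1)`. On `[X₀, ∞)` the function `g` is strictly
decreasing, since `g' r = -β (r - X₀) ((β - 1) r² + 1) (1 + r²)^(β/2 - 2)`; it starts at
`g X₀ = (1 + X₀²)^(β/2) > 0` and tends to `-∞`, being the product of a quotient of quadratics
tending to `1 - β < 0` with `(1 + r²)^(β/2) → ∞`. For `β = 2` the equation is the quadratic
`-r² + 2 X₀ r + 1 = -A/a`, i.e. `(r - X₀)² = X₀² + 1 + A/a`.
-/

open Set Filter Topology Polynomial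

noncomputable def scaledQuadratic (β X₀ r : ℝ) : ℝ :=
  ((1 - β) * r ^ 2 + β * X₀ * r + 1) * (1 + r ^ 2) ^ (β / 2 - 1)

section
variable {β X₀ : ℝ}

lemma quadratic_eq_neg_mul_rpow_iff (c r : ℝ) :
    (1 - β) * r ^ 2 + β * X₀ * r + 1 = -c * (1 + r ^ 2) ^ (1 - β / 2) ↔
      scaledQuadratic β X₀ r = -c := by
  have hpos : 0 < 1 + r ^ 2 := by positivity
  have hne : (1 + r ^ 2) ^ (β / 2 - 1) ≠ 0 := (Real.rpow_pos_of_pos hpos _).ne'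
  rw [scaledQuadratic, show 1 - β / 2 = -(β / 2 - 1) by ring, Real.rpow_neg hpos.le,
    eq_mul_inv_iff_mul_eq₀ hne]

lemma continuous_scaledQuadratic : Continuous (scaledQuadratic β X₀) := by
  unfold scaledQuadratic
  exact (by fun_prop : Continuous fun r : ℝ => (1 - β) * r ^ 2 + β * X₀ * r + 1).mul
    ((by fun_prop : Continuous fun r : ℝ => 1 + r ^ 2).rpow_const fun r => Or.inl (by positivity))

lemma hasDerivAt_scaledQuadratic (r : ℝ) :
    HasDerivAt (scaledQuadratic β X₀)
      (-(β * (r - X₀) * ((β - 1) * r ^ 2 + 1)) * (1 + r ^ 2) ^ (β / 2 - 1) / (1 + r ^ 2)) r := by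
  have hpos : 0 < 1 + r ^ 2 := by positivity
  have hQ : HasDerivAt (fun r : ℝ => (1 - β) * r ^ 2 + β * X₀ * r + 1)
      (2 * (1 - β) * r + β * X₀) r := by
    refine ((((hasDerivAt_pow 2 r).const_mul (1 - β)).add
      ((hasDerivAt_id' r).const_mul (β * X₀))).add_const 1).congr_deriv ?_
    norm_num
    ring
  have hB : HasDerivAt (fun r : ℝ => 1 + r ^ 2) (2 * r) r := by
    simpa using (hasDerivAt_pow 2 r).const_add 1
  have hP := hB.rpow_const (p := β / 2 - 1) (Or.inl hpos.ne')
  rw [Real.rpow_sub_one hpos.ne'] at hP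
  refine (hQ.mul hP).congr_deriv ?_
  field_simp
  ring

lemma strictAntiOn_scaledQuadratic (hβ : 1 < β) :
    StrictAntiOn (scaledQuadratic β X₀) (Ici X₀) := by
  refine strictAntiOn_of_hasDerivWithinAt_neg (convex_Ici X₀)
    continuous_scaledQuadratic.continuousOn
    (fun r _ => (hasDerivAt_scaledQuadratic r).hasDerivWithinAt) fun r hr => ?_
  rw [interior_Ici] at hr
  have hr : 0 < r - X₀ := sub_pos.mpr hr
  have : 0 < (β - 1) * r ^ 2 + 1 := by nlinarith [sq_nonneg r]
  have : 0 < (1 + r ^ 2) ^ (β / 2 - 1) := Real.rpow_pos_of_pos (by positivity) _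
  have : 0 < β * (r - X₀) * ((β - 1) * r ^ 2 + 1) := by positivity
  rw [neg_mul, neg_div, neg_lt_zero]
  positivity

lemma tendsto_quadratic_div_atTop (hβ : β ≠ 1) :
    Tendsto (fun r : ℝ => ((1 - β) * r ^ 2 + β * X₀ * r + 1) / (1 + r ^ 2)) atTop (𝓝 (1 - β)) := by
  have hβ : 1 - β ≠ 0 := sub_ne_zero.mpr (Ne.symm hβ)
  have h := div_tendsto_atTop_leadingCoeff_div_of_degree_eq
    (P := C (1 - β) * X ^ 2 + C (β * X₀) * X + C 1) (Q := C 1 * X ^ 2 + C 0 * X + C 1)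
    (by rw [degree_quadratic hβ, degree_quadratic one_ne_zero])
  rw [leadingCoeff_quadratic hβ, leadingCoeff_quadratic one_ne_zero, div_one] at h
  convert h using 2 with r
  simp only [eval_add, eval_mul, eval_pow, eval_C, eval_X]
  ring

lemma tendsto_scaledQuadratic_atTop (hβ : 1 < β) :
    Tendsto (scaledQuadratic β X₀) atTop atBot := by
  have h1 : Tendsto (fun r : ℝ => 1 + r ^ 2) atTop atTop :=
    tendsto_atTop_add_const_left _ _ (tendsto_pow_atTop two_ne_zero)
  convert (tendsto_quadratic_div_atTop (X₀ := X₀) hβ.ne').neg_mul_atTop (by linarith)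
    ((tendsto_rpow_atTop (by linarith : (0:ℝ) < β / 2)).comp h1) using 1
  ext r
  simp only [scaledQuadratic, Function.comp_apply,
    Real.rpow_sub_one (by positivity : (1 + r ^ 2) ≠ 0)]
  ring

lemma existsUnique_scaledQuadratic_eq_neg (hβ : 1 < β) {c : ℝ} (hc : 0 < c) :
    ∃! r, X₀ ≤ r ∧ scaledQuadratic β X₀ r = -c := by
  have hstart : 0 < scaledQuadratic β X₀ X₀ := by
    have : 0 < (1 + X₀ ^ 2) ^ (β / 2 - 1) := Real.rpow_pos_of_pos (by positivity) _
    rw [scaledQuadratic]; nlinarith [sq_nonneg X₀]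
  obtain ⟨r, hr, hrc⟩ := intermediate_value_Ici' continuous_scaledQuadratic.continuousOn
    (tendsto_scaledQuadratic_atTop hβ) (show -c ≤ scaledQuadratic β X₀ X₀ by linarith)
  exact ⟨r, ⟨hr, hrc⟩, fun s ⟨hs, hsc⟩ =>
    (strictAntiOn_scaledQuadratic hβ).injOn hs hr (hsc.trans hrc.symm)⟩

end

theorem stmt_16_general (β X₀ a A : ℝ) (hβ : 1 < β) (ha : 0 < a) (hA : 0 < A) :
    (∃! r : ℝ, X₀ ≤ r ∧
      (1 - β) * r ^ 2 + β * X₀ * r + 1 = -(A / a) * (1 + r ^ 2) ^ (1 - β / 2)) ∧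
    (β = 2 → ∀ r : ℝ, (X₀ ≤ r ∧
        (1 - β) * r ^ 2 + β * X₀ * r + 1 = -(A / a) * (1 + r ^ 2) ^ (1 - β / 2)) →
      r = X₀ + Real.sqrt (X₀ ^ 2 + 1 + A / a)) := by
  refine ⟨?_, ?_⟩
  · simpa only [quadratic_eq_neg_mul_rpow_iff] using
      existsUnique_scaledQuadratic_eq_neg hβ (div_pos hA ha)
  · rintro rfl r ⟨hr, hrA⟩
    norm_num at hrA
    have hsq : X₀ ^ 2 + 1 + A / a = (r - X₀) ^ 2 := by linear_combination hrA
    rw [hsq, Real.sqrt_sq (sub_nonneg.mpr hr)]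
    ring

/-- For `β > 1`, `X₀ ≥ 0`, `a, A > 0`, the equation
`(1−β)r² + βX₀r + 1 = −(A/a)(1+r²)^{1−β/2}` has a unique solution `r*` on `[X₀, ∞)`,
and if `β = 2` then `r* = X₀ + √(X₀² + 1 + A/a)`. -/
theorem stmt_16 (β X₀ a A : ℝ) (hβ : 1 < β) (hX₀ : 0 ≤ X₀) (ha : 0 < a) (hA : 0 < A) :
    (∃! r : ℝ, X₀ ≤ r ∧
      (1 - β) * r ^ 2 + β * X₀ * r + 1 = -(A / a) * (1 + r ^ 2) ^ (1 - β / 2)) ∧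
    (β = 2 → ∀ r : ℝ, (X₀ ≤ r ∧
        (1 - β) * r ^ 2 + β * X₀ * r + 1 = -(A / a) * (1 + r ^ 2) ^ (1 - β / 2)) →
      r = X₀ + Real.sqrt (X₀ ^ 2 + 1 + A / a)) :=
  stmt_16_general β X₀ a A hβ ha hA
end

section
/- For the cyclic directed graph on N ≥ 3 vertices with an edge from i to i+1 (mod N), the height h̄ of the minimal directed spanning tree of the transpose graph equals N − 1, while the coalescence diameter D equals ⌊N/2⌋; in particular D ≤ h̄ and the difference h̄ − D can be arbitrarily large. -/
open Set

/-- `l` is a directed path of length `m` in the digraph `Adj` (edges `l k → l (k+1)`). -/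
def IsDiPath {α : Type*} (Adj : α → α → Prop) (l : ℕ → α) (m : ℕ) : Prop :=
  ∀ k < m, Adj (l k) (l (k + 1))

/-- Coalescence distance of `i` and `j`: the least possible value of
`max(|lⁱ|,|lʲ|)` over pairs of directed paths from `i` and `j` ending at a common
vertex (paths of length `0` allowed). -/
noncomputable def coalDist {α : Type*} (Adj : α → α → Prop) (i j : α) : ℕ :=
  sInf {m | ∃ (mi mj : ℕ) (li lj : ℕ → α), li 0 = i ∧ lj 0 = j ∧
    IsDiPath Adj li mi ∧ IsDiPath Adj lj mj ∧ li mi = lj mj ∧ m = max mi mj}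

/-- Coalescence diameter: `D = sup_{i ≠ j} d_{ij}`. -/
noncomputable def coalDiam {α : Type*} (Adj : α → α → Prop) : ℕ :=
  sSup {m | ∃ i j, i ≠ j ∧ m = coalDist Adj i j}

/-- `p` is a spanning arborescence of the transpose of `Adj`, rooted at `r`: every
non-root vertex `i` has a parent `p i` with an edge `p i → i` in `Adj` (i.e. an edge
`i → p i` in the transpose), and iterating `p` reaches the root. -/
def IsTransposeArborescence {α : Type*} (Adj : α → α → Prop) (p : α → α) (r : α) : Prop :=
  p r = r ∧ (∀ i, i ≠ r → Adj (p i) i) ∧ ∀ i, ∃ k, p^[k] i = r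

/-- Depth of vertex `i` in the arborescence `p` rooted at `r`. -/
noncomputable def arboDepth {α : Type*} (p : α → α) (r : α) (i : α) : ℕ :=
  sInf {k | p^[k] i = r}

/-
On the directed cycle, walking along edges from `i` just adds to `i` in `ℤ/N`. Two walks from
`i` and `j` of lengths `a` and `b` meet iff `a - b ≡ j - i`, so the cheapest meeting walks
around the cycle the shorter way, giving `d(i, j) = min(j - i, i - j)`; for `i ≠ j` these two
residues sum to `N`, so `D = ⌊N/2⌋`, attained at antipodal vertices. In the transpose, the
only edge out of `i` goes to `i - 1`, so every arborescence rooted at `r` is the path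
`r - 1 → r - 2 → ⋯ → r`, of height `N - 1`.
-/

open scoped Fin.CommRing

section SuccPaths

variable {α : Type*} [AddMonoidWithOne α]

theorem isDiPath_add_natCast (a : α) (m : ℕ) :
    IsDiPath (fun a b : α => b = a + 1) (fun k => a + k) m := fun k _ => by
  dsimp only
  rw [Nat.cast_succ, add_assoc]

theorem IsDiPath.apply_eq_add_natCast {l : ℕ → α} {m : ℕ}
    (hl : IsDiPath (fun a b : α => b = a + 1) l m) {k : ℕ} (hk : k ≤ m) : l k = l 0 + k := by
  induction k with
  | zero => simp
  | succ k ih => rw [hl k hk, ih (by omega), Nat.cast_succ, add_assoc]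

end SuccPaths

namespace Fin

variable {N : ℕ} [NeZero N]

theorem val_eq_add_one_mod_iff {i j : Fin N} : (j : ℕ) = (i + 1) % N ↔ j = i + 1 := by
  rw [Fin.ext_iff, Fin.val_add, Fin.val_one', Nat.add_mod_mod]

theorem val_sub_add_val_sub {i j : Fin N} (h : i ≠ j) : (j - i).val + (i - j).val = N := by
  rw [← neg_sub j i, Fin.val_neg, if_neg (sub_ne_zero.2 h.symm)]
  have := (j - i).isLt
  omega

theorem sub_natCast_eq_iff {i r : Fin N} {k : ℕ} (hk : k < N) :
    i - k = r ↔ k = (i - r).val := by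
  rw [sub_eq_iff_eq_add, ← sub_eq_iff_eq_add', Fin.ext_iff, Fin.val_natCast, Nat.mod_eq_of_lt hk,
    eq_comm]

theorem val_sub_le_of_add_eq {i j : Fin N} {a b : ℕ} (h : i + a = j + b) (hba : b ≤ a) :
    (j - i).val ≤ a := by
  have hsub : j - i = ((a - b : ℕ) : Fin N) := by
    rw [Nat.cast_sub hba, sub_eq_sub_iff_add_eq_add, ← h, add_comm]
  calc (j - i).val = (a - b) % N := by rw [hsub, Fin.val_natCast]
    _ ≤ a := (Nat.mod_le _ _).trans (Nat.sub_le _ _)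

theorem min_val_sub_le_max {i j : Fin N} {a b : ℕ} (h : i + a = j + b) :
    min (j - i).val (i - j).val ≤ max a b := by
  rcases le_total b a with hba | hab
  · exact (min_le_left _ _).trans ((val_sub_le_of_add_eq h hba).trans (le_max_left _ _))
  · exact (min_le_right _ _).trans ((val_sub_le_of_add_eq h.symm hab).trans (le_max_right _ _))

end Fin

section Cycle

variable {N : ℕ} [NeZero N]

theorem coalDist_cycle (i j : Fin N) :
    coalDist (fun a b : Fin N => b = a + 1) i j = min (j - i).val (i - j).val := by
  refine IsLeast.csInf_eq ⟨?_, ?_⟩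
  · rcases le_total (j - i).val (i - j).val with h | h
    · refine ⟨_, 0, _, _, add_zero i, add_zero j, isDiPath_add_natCast i (j - i).val,
        isDiPath_add_natCast j 0, ?_, by simp [h]⟩
      simp
    · refine ⟨0, _, _, _, add_zero i, add_zero j, isDiPath_add_natCast i 0,
        isDiPath_add_natCast j (i - j).val, ?_, by simp [h]⟩
      simp
  · rintro _ ⟨mi, mj, li, lj, rfl, rfl, hli, hlj, hmeet, rfl⟩
    apply Fin.min_val_sub_le_max
    rw [← hli.apply_eq_add_natCast le_rfl, ← hlj.apply_eq_add_natCast le_rfl, hmeet]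

theorem coalDiam_cycle (hN : 1 < N) :
    coalDiam (fun a b : Fin N => b = a + 1) = N / 2 := by
  have hhalf : ((N / 2 : ℕ) : Fin N).val = N / 2 := by
    rw [Fin.val_natCast, Nat.mod_eq_of_lt (by omega)]
  have hne : (0 : Fin N) ≠ (N / 2 : ℕ) := fun h => by
    rw [← Fin.val_eq_val, Fin.val_zero, hhalf] at h
    omega
  refine IsGreatest.csSup_eq ⟨⟨0, _, hne, ?_⟩, ?_⟩
  · have hsum := Fin.val_sub_add_val_sub hne
    rw [sub_zero, hhalf] at hsum
    rw [coalDist_cycle, sub_zero, hhalf]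
    omega
  · rintro _ ⟨i, j, hij, rfl⟩
    have := Fin.val_sub_add_val_sub hij
    rw [coalDist_cycle]
    omega

variable {p : Fin N → Fin N} {r : Fin N}

theorem iterate_eq_sub_natCast (hp : ∀ i, i ≠ r → i = p i + 1) (i : Fin N) {k : ℕ}
    (hk : k ≤ (i - r).val) : p^[k] i = i - k := by
  induction k with
  | zero => simp
  | succ k ih =>
    have hne : i - k ≠ r := fun h => by
      rw [Fin.sub_natCast_eq_iff (by have := (i - r).isLt; omega)] at h
      omega
    rw [Function.iterate_succ_apply', ih (by omega), eq_sub_of_add_eq (hp _ hne).symm,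
      Nat.cast_succ, sub_add_eq_sub_sub]

theorem iterate_val_sub_eq_root (hp : ∀ i, i ≠ r → i = p i + 1) (i : Fin N) :
    p^[(i - r).val] i = r := by
  rw [iterate_eq_sub_natCast hp i le_rfl, Fin.sub_natCast_eq_iff (i - r).isLt]

theorem arboDepth_eq_val_sub (hp : ∀ i, i ≠ r → i = p i + 1) (i : Fin N) :
    arboDepth p r i = (i - r).val := by
  refine IsLeast.csInf_eq ⟨iterate_val_sub_eq_root hp i, fun k hk => not_lt.1 fun hlt => ?_⟩
  have hk : p^[k] i = r := hk
  rw [iterate_eq_sub_natCast hp i hlt.le, Fin.sub_natCast_eq_iff (hlt.trans (i - r).isLt)] at hk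
  omega

theorem iSup_arboDepth (hp : ∀ i, i ≠ r → i = p i + 1) :
    ⨆ i, arboDepth p r i = N - 1 := by
  simp_rw [arboDepth_eq_val_sub hp]
  have hlast : (r + ((N - 1 : ℕ) : Fin N) - r).val = N - 1 := by
    rw [add_sub_cancel_left, Fin.val_natCast, Nat.mod_eq_of_lt (Nat.sub_lt (NeZero.pos N) one_pos)]
  refine le_antisymm (ciSup_le fun i => Nat.le_sub_one_of_lt (i - r).isLt) ?_
  exact le_ciSup_of_le (Set.finite_range _).bddAbove _ hlast.ge

theorem isTransposeArborescence_cycle_pred (r : Fin N) :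
    IsTransposeArborescence (fun a b : Fin N => b = a + 1)
      (fun i => if i = r then r else i - 1) r := by
  have hp : ∀ i, i ≠ r → i = (if i = r then r else i - 1) + 1 := fun i hi => by
    rw [if_neg hi, sub_add_cancel]
  exact ⟨if_pos rfl, hp, fun i => ⟨_, iterate_val_sub_eq_root hp i⟩⟩

end Cycle

/-- For the directed cycle on `N ≥ 3` vertices (edge `i → i+1 mod N`), every spanning
arborescence of the transpose graph has height exactly `N − 1` (so the minimal
spanning-tree height is `h̄ = N − 1`), while the coalescence diameter is `D = ⌊N/2⌋`,
and `D ≤ h̄`. -/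
theorem stmt_17 (N : ℕ) (hN : 3 ≤ N) :
    let Adj : Fin N → Fin N → Prop := fun i j =>
      (j : ℕ) = ((i : ℕ) + 1) % N
    (∀ (p : Fin N → Fin N) (r : Fin N), IsTransposeArborescence Adj p r →
        (⨆ i : Fin N, arboDepth p r i) = N - 1) ∧
    (∃ (p : Fin N → Fin N) (r : Fin N), IsTransposeArborescence Adj p r ∧
        (⨆ i : Fin N, arboDepth p r i) = N - 1) ∧
    coalDiam Adj = N / 2 ∧ N / 2 ≤ N - 1 := by
  intro Adj
  have : NeZero N := ⟨by omega⟩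
  have hAdj : Adj = fun a b : Fin N => b = a + 1 := by
    funext a b
    exact propext Fin.val_eq_add_one_mod_iff
  rw [hAdj]
  have hpred := isTransposeArborescence_cycle_pred (0 : Fin N)
  exact ⟨fun p r hp => iSup_arboDepth hp.2.1, ⟨_, 0, hpred, iSup_arboDepth hpred.2.1⟩,
    coalDiam_cycle (by omega), by omega⟩
end
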